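/- arXiv:2204.11303 — 11 statements merged into one kernel-verified Lean document; each statement's English description precedes it below -/
import Mathlib

section
/- Let G be a finite group, p a prime, S a Sylow p-subgroup of G, and D a nontrivial subgroup of S that is strongly closed in S with respect to G. Let H be the subgroup of G generated by the set {x ∈ G : D ∩ x⁻¹Dx ≠ 1}. If H is a proper subgroup of G, then H is strongly D-embedded in G. -/
/-- `H` is strongly `D`-embedded in `G`: `H` is proper, some conjugate of `D`
lies in `H`, and for every `g ∉ H` the subgroup `H ∩ g⁻¹Hg` contains no
`G`-conjugate of any nontrivial subgroup of `D`. -/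
def IsStronglyDEmbedded {G : Type*} [Group G] (D H : Subgroup G) : Prop :=
  H ≠ ⊤ ∧
  (∃ x : G, ∀ d ∈ D, x⁻¹ * d * x ∈ H) ∧
  (∀ g : G, g ∉ H → ∀ U : Subgroup G, U ≤ D → U ≠ ⊥ → ∀ y : G,
    ¬ (∀ u ∈ U, y⁻¹ * u * y ∈ H ∧ g * (y⁻¹ * u * y) * g⁻¹ ∈ H))

theorem stmt_1 {G : Type*} [Group G] [Finite G] (p : ℕ) [Fact p.Prime]
    (S : Sylow p G) (D : Subgroup G) (hDS : D ≤ (S : Subgroup G)) (hD : D ≠ ⊥)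
    (hSC : ∀ x ∈ D, ∀ g : G, g⁻¹ * x * g ∈ (S : Subgroup G) → g⁻¹ * x * g ∈ D)
    (H : Subgroup G)
    (hH : H = Subgroup.closure {x : G | ∃ d : G, d ≠ 1 ∧ d ∈ D ∧ x * d * x⁻¹ ∈ D})
    (hprop : H ≠ ⊤) :
    IsStronglyDEmbedded D H := by
  -- a nontrivial element of D
  obtain ⟨d0, hd0D, hd01⟩ : ∃ x ∈ D, x ≠ (1 : G) := by
    rcases D.bot_or_exists_ne_one with h | h
    · exact absurd h hD
    · exact h
  -- membership in the generating set gives membership in H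
  have hgen : ∀ x : G, (∃ d : G, d ≠ 1 ∧ d ∈ D ∧ x * d * x⁻¹ ∈ D) → x ∈ H := by
    intro x hx
    rw [hH]
    exact Subgroup.subset_closure hx
  -- D ≤ H
  have hDH : D ≤ H := by
    intro d hd
    by_cases hd1 : d = 1
    · rw [hd1]; exact one_mem H
    · exact hgen d ⟨d, hd1, hd, by rwa [mul_inv_cancel_right]⟩
  -- S ≤ H
  have hSH : (S : Subgroup G) ≤ H := by
    intro s hs
    refine hgen s ⟨d0, hd01, hd0D, ?_⟩
    have hmem : (s⁻¹)⁻¹ * d0 * s⁻¹ ∈ (S : Subgroup G) := by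
      rw [inv_inv]
      exact mul_mem (mul_mem hs (hDS hd0D)) (inv_mem hs)
    have := hSC d0 hd0D s⁻¹ hmem
    rwa [inv_inv] at this
  -- key lemma: if a conjugate z⁻¹ u z of a nontrivial u ∈ D lies in H, then z ∈ H
  have key : ∀ u ∈ D, u ≠ 1 → ∀ z : G, z⁻¹ * u * z ∈ H → z ∈ H := by
    intro u hu hu1 z hw
    set w : G := z⁻¹ * u * z with hwdef
    -- order of u is a power of p
    obtain ⟨k, hk⟩ := IsPGroup.iff_orderOf.mp S.2 ⟨u, hDS hu⟩
    rw [Subgroup.orderOf_mk] at hk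
    -- order of w equals order of u
    have horder : orderOf w = p ^ k := by
      have hsc : SemiconjBy z⁻¹ u w := by
        unfold SemiconjBy
        rw [hwdef]
        group
      rw [← hsc.orderOf_eq z⁻¹, hk]
    -- w as an element of H generates a p-subgroup of H
    have hwH : (⟨w, hw⟩ : H) ∈ Subgroup.zpowers (⟨w, hw⟩ : H) := Subgroup.mem_zpowers _
    have hpg : IsPGroup p (Subgroup.zpowers (⟨w, hw⟩ : H)) := by
      refine IsPGroup.of_card (n := k) ?_
      rw [Nat.card_zpowers, Subgroup.orderOf_mk, horder]
    obtain ⟨P, hP⟩ := hpg.exists_le_sylow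
    -- conjugate P to the Sylow S of H
    have hSsylH : (S.subtype hSH : Sylow p H) = S.subtype hSH := rfl
    obtain ⟨h, hh⟩ := MulAction.exists_smul_eq H P (S.subtype hSH)
    have hwP : (⟨w, hw⟩ : H) ∈ (P : Subgroup H) := hP hwH
    have hconj : h * (⟨w, hw⟩ : H) * h⁻¹ ∈ ((S.subtype hSH : Sylow p H) : Subgroup H) := by
      rw [← hh, Sylow.coe_subgroup_smul]
      have := Subgroup.smul_mem_pointwise_smul (⟨w, hw⟩ : H) (MulAut.conj h) (P : Subgroup H) hwP
      simpa [MulAut.conj] using this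
    rw [Sylow.coe_subtype, Subgroup.mem_subgroupOf] at hconj
    -- so (h:G) * w * (h:G)⁻¹ ∈ S
    have hconjS : (h : G) * w * (h : G)⁻¹ ∈ (S : Subgroup G) := by
      simpa using hconj
    -- apply strong closure with g = z * (h:G)⁻¹
    set c : G := (h : G) with hcdef
    have heq : (z * c⁻¹)⁻¹ * u * (z * c⁻¹) = c * w * c⁻¹ := by
      rw [hwdef]; group
    have hmemS : (z * c⁻¹)⁻¹ * u * (z * c⁻¹) ∈ (S : Subgroup G) := by
      rw [heq]; exact hconjS
    have hmemD : (z * c⁻¹)⁻¹ * u * (z * c⁻¹) ∈ D := hSC u hu (z * c⁻¹) hmemS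
    -- hence c * z⁻¹ ∈ H
    have hcz : c * z⁻¹ ∈ H := by
      refine hgen (c * z⁻¹) ⟨u, hu1, hu, ?_⟩
      have : (c * z⁻¹) * u * (c * z⁻¹)⁻¹ = (z * c⁻¹)⁻¹ * u * (z * c⁻¹) := by group
      rwa [this]
    -- c ∈ H since h : H
    have hcH : c ∈ H := h.2
    have : z⁻¹ ∈ H := by
      have := mul_mem (inv_mem hcH) hcz
      rwa [inv_mul_cancel_left] at this
    exact (inv_mem_iff (x := z)).mp this
  refine ⟨hprop, ⟨1, fun d hd => by simpa using hDH hd⟩, ?_⟩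
  intro g hg U hUD hU y hcontra
  obtain ⟨u, huU, hu1⟩ : ∃ x ∈ U, x ≠ (1 : G) := by
    rcases U.bot_or_exists_ne_one with h | h
    · exact absurd h hU
    · exact h
  have huD : u ∈ D := hUD huU
  obtain ⟨h1, h2⟩ := hcontra u huU
  have hy : y ∈ H := key u huD hu1 y h1
  have h2' : (y * g⁻¹)⁻¹ * u * (y * g⁻¹) ∈ H := by
    have : (y * g⁻¹)⁻¹ * u * (y * g⁻¹) = g * (y⁻¹ * u * y) * g⁻¹ := by group
    rwa [this]
  have hyg : y * g⁻¹ ∈ H := key u huD hu1 (y * g⁻¹) h2'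
  have : g⁻¹ ∈ H := by
    have := mul_mem (inv_mem hy) hyg
    rwa [inv_mul_cancel_left] at this
  exact hg ((inv_mem_iff (x := g)).mp this)
end

section
/- Let G be a finite group, p a prime, S a Sylow p-subgroup of G, and D a nontrivial subgroup of S that is strongly closed in S with respect to G. Suppose K is a strongly D-embedded subgroup of G with D ≤ K. Then the subgroup H of G generated by {x ∈ G : D ∩ x⁻¹Dx ≠ 1} is contained in K; moreover, every normal p-subgroup N of G satisfies N ∩ D = 1. -/
open Pointwise

theorem stmt_2 {G : Type*} [Group G] [Finite G] (p : ℕ) [Fact p.Prime]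
    (S : Sylow p G) (D : Subgroup G) (hDS : D ≤ (S : Subgroup G)) (hD : D ≠ ⊥)
    (hSC : ∀ x ∈ D, ∀ g : G, g⁻¹ * x * g ∈ (S : Subgroup G) → g⁻¹ * x * g ∈ D)
    (K : Subgroup G) (hK : IsStronglyDEmbedded D K) (hDK : D ≤ K)
    (H : Subgroup G)
    (hH : H = Subgroup.closure {x : G | ∃ d : G, d ≠ 1 ∧ d ∈ D ∧ x * d * x⁻¹ ∈ D}) :
    H ≤ K ∧ ∀ N : Subgroup G, N.Normal → IsPGroup p N → N ⊓ D = ⊥ := by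
  have hHK : H ≤ K := by
    rw [hH, Subgroup.closure_le]
    rintro x ⟨d, hd1, hdD, hdx⟩
    by_contra hx
    refine hK.2.2 x hx (D ⊓ Subgroup.map (MulAut.conj x⁻¹).toMonoidHom D)
      inf_le_left ?_ 1 ?_
    · intro hbot
      have : d ∈ (⊥ : Subgroup G) := by
        rw [← hbot]
        refine ⟨hdD, x * d * x⁻¹, hdx, ?_⟩
        simp [MulAut.conj, mul_assoc]
      exact hd1 (Subgroup.mem_bot.mp this)
    · rintro u ⟨huD, v, hvD, hvu⟩
      have hu : x * u * x⁻¹ = v := by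
        have : u = x⁻¹ * v * x := by
          rw [← hvu]; simp [MulAut.conj, mul_assoc]
        rw [this]; group
      constructor
      · simpa using hDK huD
      · have : x * (1⁻¹ * u * 1) * x⁻¹ = v := by simpa using hu
        rw [this]; exact hDK hvD
  refine ⟨hHK, fun N hNnorm hNp => ?_⟩
  by_contra hND
  obtain ⟨⟨d, hdND⟩, hd1⟩ := Subgroup.ne_bot_iff_exists_ne_one.mp hND
  have hdN : (d : G) ∈ N := hdND.1
  have hdD : (d : G) ∈ D := hdND.2
  -- N ≤ S
  obtain ⟨Q, hNQ⟩ := hNp.exists_le_sylow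
  obtain ⟨g, hg⟩ := MulAction.exists_smul_eq G Q S
  have hNS : N ≤ (S : Subgroup G) := by
    intro n hn
    rw [← hg, Sylow.coe_subgroup_smul, Subgroup.mem_pointwise_smul_iff_inv_smul_mem]
    exact hNQ (by simpa [MulAut.conj] using hNnorm.conj_mem n hn g⁻¹)
  -- every element of G is in the generating set
  have hHtop : H = ⊤ := by
    rw [hH, eq_top_iff]
    intro y _
    apply Subgroup.subset_closure
    refine ⟨d, by simpa [Subtype.ext_iff] using hd1, hdD, ?_⟩
    have h1 : (y⁻¹)⁻¹ * (d : G) * y⁻¹ ∈ (S : Subgroup G) := by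
      simpa using hNS (hNnorm.conj_mem _ hdN y)
    have := hSC d hdD y⁻¹ h1
    simpa using this
  exact hK.1 (top_le_iff.mp (hHtop ▸ hHK))
end

section
/- Let p be a prime and P a finite p-group of order p^n. Then the number of nontrivial cyclic subgroups of P is congruent to n modulo p − 1. -/
open Finset

private lemma sum_one_modEq {ι : Type*} {m : ℕ} {s : Finset ι} {f : ι → ℕ}
    (h : ∀ i ∈ s, f i ≡ 1 [MOD m]) : ∑ i ∈ s, f i ≡ s.card [MOD m] := by
  classical
  induction s using Finset.induction with
  | empty => simp [Nat.ModEq.refl]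
  | @insert a s hx ih =>
    rw [Finset.sum_insert hx, Finset.card_insert_of_notMem hx]
    have := (h a (Finset.mem_insert_self a s)).add
      (ih fun i hi => h i (Finset.mem_insert_of_mem hi))
    simpa [Nat.add_comm] using this

private lemma zpowers_isCyclic {P : Type*} [Group P] (x : P) :
    IsCyclic (Subgroup.zpowers x) := by
  refine ⟨⟨⟨x, Subgroup.mem_zpowers x⟩, ?_⟩⟩
  rintro ⟨y, hy⟩
  obtain ⟨k, hk⟩ := hy
  exact ⟨k, Subtype.ext (by simpa using hk)⟩

theorem stmt_3 {P : Type*} [Group P] [Finite P] (p n : ℕ) (hp : p.Prime)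
    (hcard : Nat.card P = p ^ n) :
    Nat.card {C : Subgroup P // C ≠ ⊥ ∧ IsCyclic C} ≡ n [MOD p - 1] := by
  classical
  have : Fintype P := Fintype.ofFinite P
  have : Fintype (Subgroup P) := Fintype.ofFinite _
  set T : Finset (Subgroup P) := univ.filter fun C => C ≠ ⊥ ∧ IsCyclic C with hT
  set T' : Finset (Subgroup P) := univ.filter fun C => IsCyclic C with hT'
  -- fiber count
  have fiber : ∀ C : Subgroup P, IsCyclic C →
      (univ.filter fun x : P => Subgroup.zpowers x = C).card
        = Nat.totient (Nat.card C) := by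
    intro C hC
    have : Fintype C := Fintype.ofFinite _
    have key : ∀ x : P, Subgroup.zpowers x = C ↔
        ∃ hx : x ∈ C, orderOf (⟨x, hx⟩ : C) = Fintype.card C := by
      intro x
      constructor
      · intro h
        have hx : x ∈ C := h ▸ Subgroup.mem_zpowers x
        refine ⟨hx, ?_⟩
        rw [Subgroup.orderOf_mk, ← Nat.card_zpowers, h, Nat.card_eq_fintype_card]
      · rintro ⟨hx, hord⟩
        refine Subgroup.eq_of_le_of_card_ge (Subgroup.zpowers_le_of_mem hx) ?_
        rw [Nat.card_zpowers, ← Subgroup.orderOf_mk x hx, hord, Nat.card_eq_fintype_card]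
    rw [← Nat.card_eq_fintype_card] at key
    have := IsCyclic.card_orderOf_eq_totient (α := C) (d := Fintype.card C) dvd_rfl
    rw [Nat.card_eq_fintype_card, ← this]
    apply Finset.card_bij (fun x hx => (⟨x, ((key x).mp (by simpa using hx)).choose⟩ : C))
    · intro x hx
      simp only [Finset.mem_filter, Finset.mem_univ, true_and]
      rw [← Nat.card_eq_fintype_card]
      exact ((key x).mp (by simpa using hx)).choose_spec
    · intro a ha b hb hab
      exact congrArg Subtype.val hab
    · rintro ⟨y, hy⟩ hmem
      simp only [Finset.mem_filter, Finset.mem_univ, true_and] at hmem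
      refine ⟨y, ?_, rfl⟩
      simp only [Finset.mem_filter, Finset.mem_univ, true_and]
      exact (key y).mpr ⟨hy, by rw [Nat.card_eq_fintype_card]; exact hmem⟩
  -- partition of P by zpowers
  have count : Fintype.card P = ∑ C ∈ T', Nat.totient (Nat.card C) := by
    rw [← Finset.card_univ,
      Finset.card_eq_sum_card_fiberwise (f := fun x : P => Subgroup.zpowers x)
        (t := T') (fun x _ => by simp [hT', zpowers_isCyclic x])]
    exact Finset.sum_congr rfl fun C hC => fiber C (by simpa [hT'] using hC)
  -- split off ⊥
  have hbot : (⊥ : Subgroup P) ∈ T' :=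
    Finset.mem_filter.mpr ⟨Finset.mem_univ _, inferInstance⟩
  have hT'eq : T' = insert ⊥ T := by
    ext C
    simp only [hT', hT, Finset.mem_insert, Finset.mem_filter, Finset.mem_univ, true_and]
    by_cases h : C = ⊥
    · subst h
      exact iff_of_true inferInstance (Or.inl rfl)
    · simp [h]
  have hbotT : (⊥ : Subgroup P) ∉ T := by simp [hT]
  have sumT : ∑ C ∈ T, Nat.totient (Nat.card C) = p ^ n - 1 := by
    have := count
    rw [hT'eq, Finset.sum_insert hbotT, Subgroup.card_bot, Nat.totient_one] at this
    rw [← Nat.card_eq_fintype_card, hcard] at this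
    omega
  -- each card C = p ^ k with k ≥ 1
  have hcardC : ∀ C ∈ T, ∃ k, 0 < k ∧ Nat.card C = p ^ k := by
    intro C hC
    have hdvd : Nat.card C ∣ p ^ n := hcard ▸ Subgroup.card_subgroup_dvd_card C
    obtain ⟨k, _, hk⟩ := (Nat.dvd_prime_pow hp).mp hdvd
    refine ⟨k, ?_, hk⟩
    rcases Nat.eq_zero_or_pos k with h | h
    · exfalso
      simp only [hT, Finset.mem_filter] at hC
      exact hC.2.1 (Subgroup.card_eq_one.mp (by rw [hk, h, pow_zero]))
    · exact h
  -- totient values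
  have htot : ∀ C ∈ T, Nat.totient (Nat.card C) = (Nat.card C / p) * (p - 1) := by
    intro C hC
    obtain ⟨k, hk0, hk⟩ := hcardC C hC
    obtain ⟨m, rfl⟩ : ∃ m, k = m + 1 := ⟨k - 1, by omega⟩
    rw [hk, Nat.totient_prime_pow hp hk0, pow_succ, Nat.mul_div_cancel _ hp.pos]
    simp
  have sumT' : (∑ C ∈ T, Nat.card C / p) * (p - 1) = p ^ n - 1 := by
    rw [Finset.sum_mul, ← sumT]
    exact Finset.sum_congr rfl fun C hC => (htot C hC).symm
  -- geometric sum
  have geom : (∑ i ∈ Finset.range n, p ^ i) * (p - 1) = p ^ n - 1 := by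
    have := geom_sum_mul (x := (p : ℤ)) n
    have hp1 : (1 : ℤ) ≤ p := by exact_mod_cast hp.one_lt.le
    have h1 : (1:ℕ) ≤ p ^ n := Nat.one_le_pow _ _ hp.pos
    zify [hp.one_lt.le, h1]
    push_cast at this ⊢
    linarith [this]
  -- cancel p - 1
  have hA : (∑ C ∈ T, Nat.card C / p) = ∑ i ∈ Finset.range n, p ^ i := by
    have hne : p - 1 ≠ 0 := by have := hp.two_le; omega
    exact Nat.eq_of_mul_eq_mul_right (Nat.pos_of_ne_zero hne) (sumT'.trans geom.symm)
  -- congruences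
  have hp1 : p ≡ 1 [MOD p - 1] := by
    have h2 := hp.two_le
    exact ((Nat.modEq_iff_dvd' (by omega)).mpr dvd_rfl).symm
  have c1 : ∑ C ∈ T, Nat.card C / p ≡ T.card [MOD p - 1] := by
    apply sum_one_modEq
    intro C hC
    obtain ⟨k, hk0, hk⟩ := hcardC C hC
    obtain ⟨m, rfl⟩ : ∃ m, k = m + 1 := ⟨k - 1, by omega⟩
    rw [hk, pow_succ, Nat.mul_div_cancel _ hp.pos]
    simpa using hp1.pow m
  have c2 : ∑ i ∈ Finset.range n, p ^ i ≡ n [MOD p - 1] := by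
    have := sum_one_modEq (m := p - 1) (s := Finset.range n) (f := fun i => p ^ i)
      (fun i _ => by simpa using hp1.pow i)
    simpa using this
  have hNcard : Nat.card {C : Subgroup P // C ≠ ⊥ ∧ IsCyclic C} = T.card := by
    rw [Nat.card_eq_fintype_card, hT]
    exact (Fintype.card_subtype _)
  rw [hNcard]
  exact (c1.symm.trans (hA ▸ c2))
end

section
/- Let p and r be primes with r dividing p − 1, and let A be a group of order r^k acting on a finite p-group P of order p^n via automorphisms. Let H be an A-invariant subgroup of P of order p^c. If n is not congruent to c modulo r, then there exists a nontrivial A-invariant cyclic subgroup U of P that is not contained in H. -/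
/-!
Counting the elements outside `H` according to the cyclic subgroup they generate gives
`p ^ n - p ^ c = ∑ φ |C| = (p - 1) ∑ |C| / p`, the sums running over the set `T` of cyclic
subgroups not contained in `H`. Cancelling `p - 1` and using that every power of `p` is `1`
modulo `r` yields `|T| ≡ n - c (mod r)`, so `r ∤ |T|`. The `r`-group `A` permutes `T`, hence
fixes one of its members.
-/

open Pointwise

namespace Subgroup

variable {G : Type*} [Group G]

theorem card_generators_eq_totient (C : Subgroup G) [IsCyclic C] [Finite C] :
    Nat.card {y : G // zpowers y = C} = (Nat.card C).totient := by
  classical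
  have : Fintype C := Fintype.ofFinite C
  have generators_equiv : {y : G // zpowers y = C} ≃ {g : C // orderOf g = Nat.card C} :=
    { toFun y := ⟨⟨y, y.2.le (mem_zpowers y.1)⟩,
        by rw [orderOf_mk, ← Nat.card_zpowers, y.2]⟩
      invFun g := ⟨g.1, eq_of_le_of_card_ge (zpowers_le.mpr g.1.2)
        (by rw [Nat.card_zpowers, ← orderOf_mk _ g.1.2, g.2])⟩
      left_inv _ := rfl
      right_inv _ := rfl }
  rw [Nat.card_congr generators_equiv, Nat.card_eq_fintype_card, Fintype.card_subtype,
    Nat.card_eq_fintype_card, IsCyclic.card_orderOf_eq_totient dvd_rfl]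

def cyclicSubgroupsNotLE (H : Subgroup G) : Set (Subgroup G) :=
  {C | IsCyclic C ∧ ¬C ≤ H}

theorem card_eq_card_add_sum_totient [Finite G] (H : Subgroup G)
    [Fintype H.cyclicSubgroupsNotLE] :
    Nat.card G = Nat.card H + ∑ C : H.cyclicSubgroupsNotLE, (Nat.card C.1).totient := by
  classical
  let toCyclic (x : {x : G // x ∉ H}) : H.cyclicSubgroupsNotLE :=
    ⟨zpowers x.1, inferInstance, fun hle => x.2 (hle (mem_zpowers x.1))⟩
  have fiber_equiv (C : H.cyclicSubgroupsNotLE) :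
      {x // toCyclic x = C} ≃ {y : G // zpowers y = C} :=
    { toFun x := ⟨x.1, congrArg Subtype.val x.2⟩
      invFun y := ⟨⟨y, fun hy => C.2.2 (y.2 ▸ zpowers_le.mpr hy)⟩, Subtype.ext y.2⟩
      left_inv _ := rfl
      right_inv _ := rfl }
  calc Nat.card G = Nat.card H + Nat.card {x // x ∉ H} := by
        rw [← Nat.card_sum]; exact Nat.card_congr (Equiv.sumCompl (· ∈ H)).symm
    _ = Nat.card H + ∑ C, Nat.card {x // toCyclic x = C} := by
        rw [← Nat.card_sigma, Nat.card_congr (Equiv.sigmaFiberEquiv toCyclic)]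
    _ = Nat.card H + ∑ C : H.cyclicSubgroupsNotLE, (Nat.card C.1).totient := by
        congr 1
        refine Finset.sum_congr rfl fun C _ => ?_
        have : IsCyclic C.1 := C.2.1
        rw [Nat.card_congr (fiber_equiv C), card_generators_eq_totient]

theorem smul_zpowers {α : Type*} [Monoid α] [MulDistribMulAction α G] (a : α) (x : G) :
    a • zpowers x = zpowers (a • x) := by
  rw [pointwise_smul_def]
  exact MonoidHom.map_zpowers _ x

theorem smul_mem_cyclicSubgroupsNotLE {A : Type*} [Group A] [MulDistribMulAction A G]
    {H : Subgroup G} (hH : ∀ (a : A), ∀ x ∈ H, a • x ∈ H) {C : Subgroup G}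
    (hC : C ∈ H.cyclicSubgroupsNotLE) (a : A) :
    a • C ∈ H.cyclicSubgroupsNotLE := by
  obtain ⟨x, rfl⟩ := C.isCyclic_iff_exists_zpowers_eq_top.mp hC.1
  rw [smul_zpowers]
  refine ⟨inferInstance, fun hle => hC.2 (zpowers_le.mpr ?_)⟩
  simpa using hH a⁻¹ _ (hle (mem_zpowers (a • x)))

end Subgroup

theorem IsPGroup.exists_card_eq_pow_succ {p : ℕ} [Fact p.Prime] {G : Type*} [Group G] [Finite G]
    (hG : IsPGroup p G) {C : Subgroup G} (hC : C ≠ ⊥) : ∃ m, Nat.card C = p ^ (m + 1) := by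
  obtain ⟨k, hk⟩ := IsPGroup.iff_card.mp (hG.to_subgroup C)
  have hk0 : k ≠ 0 := by
    rintro rfl
    exact hC (Subgroup.card_eq_one.mp (by rw [hk, pow_zero]))
  obtain ⟨m, rfl⟩ := Nat.exists_eq_add_one_of_ne_zero hk0
  exact ⟨m, hk⟩

theorem Nat.card_modEq_sub_of_add_sum_totient {ι : Type*} [Fintype ι] {p r n c : ℕ}
    (hp : p.Prime) (hrp : r ∣ p - 1) (hcn : c ≤ n) (f : ι → ℕ)
    (hf : ∀ i, ∃ m, f i = p ^ (m + 1)) (hsum : p ^ c + ∑ i, (f i).totient = p ^ n) :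
    Nat.card ι ≡ n - c [MOD r] := by
  choose m hm using hf
  have hsum_int : ∑ i, (p : ℤ) ^ m i * (p - 1) = p ^ n - p ^ c := by
    have := congrArg (Nat.cast : ℕ → ℤ) hsum
    simp only [hm, Nat.totient_prime_pow_succ hp] at this
    push_cast [Nat.cast_sub hp.one_le] at this
    linear_combination this
  have hgeom : ∑ i, (p : ℤ) ^ m i = ∑ j ∈ Finset.Ico c n, (p : ℤ) ^ j := by
    refine mul_right_cancel₀ (b := (p : ℤ) - 1) (sub_ne_zero.mpr (mod_cast hp.one_lt.ne')) ?_
    rw [geom_sum_Ico_mul _ hcn, Finset.sum_mul, hsum_int]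
  have hp_one : (p : ZMod r) = 1 := mod_cast
    (ZMod.natCast_eq_natCast_iff _ _ _).mpr ((Nat.modEq_iff_dvd' hp.one_le).mpr hrp).symm
  rw [← ZMod.natCast_eq_natCast_iff]
  have := congrArg (Int.cast : ℤ → ZMod r) hgeom
  push_cast [hp_one] at this
  simpa [Nat.cast_sub hcn] using this

theorem stmt_4_general {A P : Type*} [Group A] [Group P] [Finite P]
    [MulDistribMulAction A P]
    (p r n k c : ℕ) (hp : p.Prime) (hr : r.Prime) (hrp : r ∣ p - 1)
    (hA : Nat.card A = r ^ k) (hP : Nat.card P = p ^ n)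
    (H : Subgroup P) (hHcard : Nat.card H = p ^ c)
    (hHinv : ∀ (a : A), ∀ x ∈ H, a • x ∈ H)
    (hnc : ¬ n ≡ c [MOD r]) :
    ∃ U : Subgroup P, U ≠ ⊥ ∧ IsCyclic U ∧ (∀ (a : A), ∀ x ∈ U, a • x ∈ U) ∧
      ¬ U ≤ H := by
  have : Fact p.Prime := ⟨hp⟩
  have : Fact r.Prime := ⟨hr⟩
  have hcn : c ≤ n := (Nat.pow_dvd_pow_iff_le_right hp.one_lt).mp
    (hHcard ▸ hP ▸ H.card_subgroup_dvd_card)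
  let T : SubMulAction A (Subgroup P) :=
    ⟨H.cyclicSubgroupsNotLE, fun {a _} hC => Subgroup.smul_mem_cyclicSubgroupsNotLE hHinv hC a⟩
  have := Fintype.ofFinite H.cyclicSubgroupsNotLE
  have hT : Nat.card T ≡ n - c [MOD r] :=
    Nat.card_modEq_sub_of_add_sum_totient hp hrp hcn (fun C => Nat.card C.1)
      (fun C => (IsPGroup.of_card hP).exists_card_eq_pow_succ fun hbot => C.2.2 (hbot ▸ bot_le))
      (hHcard ▸ hP ▸ H.card_eq_card_add_sum_totient.symm)
  have hrT : ¬ r ∣ Nat.card T := fun hdvd =>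
    hnc ((Nat.modEq_iff_dvd' hcn).mpr ((hT.dvd_iff dvd_rfl).mp hdvd)).symm
  obtain ⟨⟨C, hCcyc, hCH⟩, hCfix⟩ :=
    (IsPGroup.of_card hA).nonempty_fixed_point_of_prime_not_dvd_card T hrT
  refine ⟨C, fun hbot => hCH (hbot ▸ bot_le), hCcyc, fun a x hx => ?_, hCH⟩
  have hCa : a • C = C := congrArg Subtype.val (hCfix a)
  exact hCa ▸ Subgroup.smul_mem_pointwise_smul x a C hx

theorem stmt_4 {A P : Type*} [Group A] [Finite A] [Group P] [Finite P]
    [MulDistribMulAction A P]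
    (p r n k c : ℕ) (hp : p.Prime) (hr : r.Prime) (hrp : r ∣ p - 1)
    (hA : Nat.card A = r ^ k) (hP : Nat.card P = p ^ n)
    (H : Subgroup P) (hHcard : Nat.card H = p ^ c)
    (hHinv : ∀ (a : A), ∀ x ∈ H, a • x ∈ H)
    (hnc : ¬ n ≡ c [MOD r]) :
    ∃ U : Subgroup P, U ≠ ⊥ ∧ IsCyclic U ∧ (∀ (a : A), ∀ x ∈ U, a • x ∈ U) ∧
      ¬ U ≤ H :=
  stmt_4_general p r n k c hp hr hrp hA hP H hHcard hHinv hnc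
end

section
/- Let p and r be primes with r dividing p − 1, and let A be a group of order r^k acting on a finite p-group P via automorphisms. Let H be an A-invariant subgroup of P, and suppose that the fixed-point subgroup C_P(A) is contained in H. Then for every nontrivial A-invariant cyclic subgroup U of P that is not contained in H, the action of A on U is fixed-point free, i.e. C_U(A) = 1. -/
/-- (s-1)^2 divides s^m - 1 - m*(s-1) in ℤ. -/
lemma aux_sq_dvd (s : ℤ) : ∀ m : ℕ, (s - 1) ^ 2 ∣ s ^ m - 1 - m * (s - 1) := by
  intro m
  induction m with
  | zero => simp
  | succ m ih =>
    have key : s ^ (m + 1) - 1 - (m + 1 : ℕ) * (s - 1)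
        = s * (s ^ m - 1 - m * (s - 1)) + m * (s - 1) ^ 2 := by
      push_cast; ring
    rw [key]
    exact dvd_add (Dvd.dvd.mul_left ih s) (Dvd.dvd.mul_left dvd_rfl (m:ℤ))

/-- Lifting: if p ∣ s - 1 and p ∤ m and p^e ∣ s^m - 1, then p^e ∣ s - 1. -/
lemma aux_lift (p : ℕ) (hp : p.Prime) (m : ℕ) (hm : ¬ (p:ℕ) ∣ m) (s : ℤ) (hs : (p:ℤ) ∣ s - 1) :
    ∀ e : ℕ, (p:ℤ) ^ e ∣ s ^ m - 1 → (p:ℤ) ^ e ∣ s - 1 := by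
  have hpI : Prime (p : ℤ) := Nat.prime_iff_prime_int.1 hp
  intro e
  induction e with
  | zero => simp
  | succ e ih =>
    intro h
    rcases Nat.eq_zero_or_pos e with he | he
    · subst he; simpa using hs
    have h1 : (p:ℤ) ^ e ∣ s - 1 := ih (dvd_trans (pow_dvd_pow _ (Nat.le_succ e)) h)
    obtain ⟨c, hc⟩ := h1
    -- s - 1 = p^e * c
    have h2 : (p:ℤ) ^ (e + 1) ∣ (m : ℤ) * (s - 1) := by
      have hsq : (p:ℤ) ^ (e + 1) ∣ (s - 1) ^ 2 := by
        rw [hc, mul_pow, ← pow_mul]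
        exact Dvd.dvd.mul_right (pow_dvd_pow _ (by omega)) _
      have := aux_sq_dvd s m
      have h3 : (p:ℤ) ^ (e + 1) ∣ s ^ m - 1 - (m:ℤ) * (s - 1) := dvd_trans hsq this
      have := dvd_sub h h3
      simpa using this
    rw [hc] at h2 ⊢
    -- p^(e+1) ∣ m * (p^e * c) ⇒ p ∣ m * c ⇒ p ∣ c
    have h4 : (p:ℤ) ∣ (m:ℤ) * c := by
      have : (p:ℤ) ^ (e+1) ∣ (p:ℤ)^e * ((m:ℤ) * c) := by
        rw [show (p:ℤ)^e * ((m:ℤ)*c) = (m:ℤ) * ((p:ℤ)^e * c) by ring]; exact h2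
      have hne : ((p:ℤ)^e) ≠ 0 := pow_ne_zero _ (by exact_mod_cast hp.ne_zero)
      rw [pow_succ] at this
      exact (mul_dvd_mul_iff_left hne).mp this
    have h5 : (p:ℤ) ∣ c := by
      rcases hpI.dvd_mul.mp h4 with h | h
      · exact absurd (by exact_mod_cast h) hm
      · exact h
    obtain ⟨d, hd⟩ := h5
    rw [hd, pow_succ]
    exact ⟨d, by ring⟩

/-- Key number-theoretic lemma. -/
lemma aux_key (p r k e : ℕ) (hp : p.Prime) (hr : r.Prime) (hrp : r ∣ p - 1)
    (s t : ℤ) (h1 : (p:ℤ) ^ e ∣ s ^ r ^ k - 1) (h2 : (p:ℤ) ^ e ∣ s * t - t)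
    (h3 : ¬ (p:ℤ) ^ e ∣ t) : (p:ℤ) ^ e ∣ s - 1 := by
  have hpI : Prime (p : ℤ) := Nat.prime_iff_prime_int.1 hp
  by_cases hd : (p:ℤ) ∣ s - 1
  · -- lifting argument; need p ∤ r^k
    have hrne : r ≠ p := by
      have h2p : 2 ≤ p := hp.two_le
      have : r ≤ p - 1 := Nat.le_of_dvd (by omega) hrp
      omega
    have hpr : ¬ p ∣ r ^ k := fun h =>
      hrne ((Nat.prime_dvd_prime_iff_eq hp hr).mp (hp.dvd_of_dvd_pow h)).symm
    exact aux_lift p hp (r ^ k) hpr s hd e h1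
  · -- coprime case: contradiction with h3
    have hcop : IsCoprime ((p:ℤ) ^ e) (s - 1) :=
      IsCoprime.pow_left (hpI.coprime_iff_not_dvd.mpr hd)
    have : (p:ℤ) ^ e ∣ (s - 1) * t := by
      have : s * t - t = (s - 1) * t := by ring
      rwa [this] at h2
    exact absurd (hcop.dvd_of_dvd_mul_left this) h3

lemma aux_smul_zpow {A P : Type*} [Group A] [Group P] [MulDistribMulAction A P]
    (a : A) (x : P) (n : ℤ) : a • x ^ n = (a • x) ^ n :=
  (MulDistribMulAction.toMulAut A P a).toMonoidHom.map_zpow x n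

theorem stmt_5 {A P : Type*} [Group A] [Finite A] [Group P] [Finite P]
    [MulDistribMulAction A P]
    (p r k : ℕ) (hp : p.Prime) (hr : r.Prime) (hrp : r ∣ p - 1)
    (hA : Nat.card A = r ^ k) (hP : IsPGroup p P)
    (H : Subgroup P) (hHinv : ∀ (a : A), ∀ x ∈ H, a • x ∈ H)
    (hfix : ∀ x : P, (∀ a : A, a • x = x) → x ∈ H) :
    ∀ U : Subgroup P, U ≠ ⊥ → IsCyclic U → (∀ (a : A), ∀ x ∈ U, a • x ∈ U) →
      ¬ U ≤ H → ∀ x ∈ U, (∀ a : A, a • x = x) → x = 1 := by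
  intro U hUbot hUcyc hUinv hUH x hxU hxfix
  by_contra hx1
  apply hUH
  obtain ⟨g, hg⟩ := hUcyc
  set g0 : P := (g : P) with hg0
  have hgU : g0 ∈ U := g.2
  have hmem : ∀ y ∈ U, ∃ n : ℤ, g0 ^ n = y := by
    intro y hy
    obtain ⟨n, hn⟩ := hg ⟨y, hy⟩
    refine ⟨n, ?_⟩
    have := congrArg (Subtype.val) hn
    simpa using this
  haveI : Fact p.Prime := ⟨hp⟩
  obtain ⟨e, he⟩ := IsPGroup.iff_orderOf.mp hP g0
  have hcast : ((orderOf g0 : ℤ)) = (p:ℤ) ^ e := by rw [he]; push_cast; ring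
  have hfixg : ∀ a : A, a • g0 = g0 := by
    intro a
    obtain ⟨s, hs⟩ := hmem (a • g0) (hUinv a g0 hgU)
    have hiter : ∀ m : ℕ, (a ^ m) • g0 = g0 ^ (s ^ m) := by
      intro m
      induction m with
      | zero => simp
      | succ m ih =>
        rw [pow_succ', mul_smul, ih, aux_smul_zpow, ← hs, ← zpow_mul, ← pow_succ']
    -- s^(r^k) ≡ 1 mod p^e
    have haone : a ^ (r ^ k) = 1 := by rw [← hA]; exact pow_card_eq_one'
    have h1' : g0 ^ (s ^ (r ^ k)) = g0 ^ (1:ℤ) := by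
      rw [← hiter (r ^ k), haone, one_smul, zpow_one]
    have h1 : (p:ℤ) ^ e ∣ s ^ (r ^ k) - 1 := by
      have := (zpow_eq_zpow_iff_modEq.mp h1').dvd
      rw [hcast] at this
      have h' : (p:ℤ)^e ∣ (1 : ℤ) - s ^ (r^k) := this
      simpa using h'.neg_right
    obtain ⟨t, ht⟩ := hmem x hxU
    have h2 : (p:ℤ) ^ e ∣ s * t - t := by
      have hax : a • x = x := hxfix a
      have : g0 ^ (s * t) = g0 ^ t := by
        rw [zpow_mul, hs, ← aux_smul_zpow, ht, hax]
      have hdd := (zpow_eq_zpow_iff_modEq.mp this).dvd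
      rw [hcast] at hdd
      simpa using hdd.neg_right
    have h3 : ¬ ((p:ℤ) ^ e ∣ t) := by
      intro hdvd
      apply hx1
      rw [← ht]
      exact orderOf_dvd_iff_zpow_eq_one.mp (by rw [hcast]; exact hdvd)
    have hkey := aux_key p r k e hp hr hrp s t h1 h2 h3
    have : g0 ^ s = g0 ^ (1:ℤ) := by
      apply zpow_eq_zpow_iff_modEq.mpr
      rw [Int.modEq_iff_dvd, hcast]
      simpa using hkey.neg_right
    rw [zpow_one] at this
    rw [← hs]
    exact this
  intro y hy
  apply hfix
  intro a
  obtain ⟨n, hn⟩ := hmem y hy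
  rw [← hn, aux_smul_zpow, hfixg a]
end

section
/- Let p be a prime and P a finite p-group such that the quotient P/Φ(P) of P by its Frattini subgroup has order p^2 (equivalently, P is 2-generated and noncyclic). Let A be a subgroup of the automorphism group Aut(P) that does not have a normal Sylow p-subgroup. Then A acts transitively on the set of maximal subgroups of P: for any two maximal subgroups M and M' of P there exists α ∈ A with α(M) = M'. In particular, all maximal subgroups of P are isomorphic. -/
/-!
The kernel of `Aut P → Aut (P/Φ(P))` is a `p`-group (Burnside): a `q`-group of automorphisms,
`q ≠ p`, acting trivially on `P/Φ(P)` fixes a point in every coset of `Φ(P)`, so its fixed points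
generate `P` together with `Φ(P)`, hence are all of `P`. Therefore the image `Ā` of `A` in
`Aut V`, `V = P/Φ(P)`, still has no normal Sylow `p`-subgroup, and it suffices to show that `Ā` is
transitive on the maximal subgroups of `V`, a group of order `p²`.

If `V` is cyclic it has only one maximal subgroup. Otherwise the maximal subgroups are the `p + 1`
lines of `V ≅ 𝔽_p²`. A nontrivial `p`-element `σ` of `Aut V` is a transvection: it fixes a line
`K_σ` pointwise, acts trivially on `V/K_σ`, and its powers permute the other `p` lines
transitively; moreover the `p`-elements with the same fixed line form the cyclic group `⟨σ⟩`. As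
`Ā` has no normal Sylow `p`-subgroup, it contains transvections `σ`, `τ` with `K_σ ≠ K_τ`, and
between them `σ` and `τ` move every line onto a third line.
-/

open Subgroup Pointwise

theorem IsPGroup.smul_eq_of_orbit_subset {G α : Type*} [Group G] [MulAction G α] {p : ℕ}
    [Fact p.Prime] (hG : IsPGroup p G) {s : Set α} (hs : s.Finite) (hsp : s.ncard < p) {a : α}
    (ha : MulAction.orbit G a ⊆ s) (g : G) : g • a = a := by
  have : Finite (MulAction.orbit G a) := hs.subset ha
  obtain ⟨n, hn⟩ := hG.card_orbit a
  have hn0 : n = 0 := by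
    have : p ^ n < p ^ 1 := by
      rw [← hn, pow_one, Nat.card_coe_set_eq]
      exact (Set.ncard_le_ncard ha hs).trans_lt hsp
    have := (Nat.pow_lt_pow_iff_right (Fact.out : p.Prime).one_lt).mp this
    omega
  rw [hn0, pow_zero, Nat.card_coe_set_eq, Set.ncard_eq_one] at hn
  obtain ⟨b, hb⟩ := hn
  have h1 : g • a ∈ MulAction.orbit G a := MulAction.mem_orbit a g
  have h2 : a ∈ MulAction.orbit G a := MulAction.mem_orbit_self a
  rw [hb] at h1 h2
  exact h1.trans h2.symm

section

variable {G : Type*} [Group G] {p : ℕ} [hp : Fact p.Prime]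

theorem Subgroup.eq_zpowers_of_card_eq_prime {W : Subgroup G} (hW : Nat.card W = p) {x : G}
    (hx : x ∈ W) (hx1 : x ≠ 1) : W = zpowers x := by
  have : Finite W := Nat.finite_of_card_ne_zero (hW ▸ hp.out.ne_zero)
  have hdvd : orderOf x ∣ p := hW ▸ W.orderOf_dvd_natCard hx
  have hord : orderOf x = p :=
    (hp.out.eq_one_or_self_of_dvd _ hdvd).resolve_left (mt orderOf_eq_one_iff.mp hx1)
  exact (eq_of_le_of_card_ge (zpowers_le.mpr hx) (by rw [Nat.card_zpowers, hord, hW])).symm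

section PrimeSquare

variable [Finite G] (hG : Nat.card G = p ^ 2)
include hG

theorem Subgroup.card_eq_one_or_eq_prime_or_eq_top (W : Subgroup G) :
    Nat.card W = 1 ∨ Nat.card W = p ∨ W = ⊤ := by
  obtain ⟨k, hk, hWk⟩ := (Nat.dvd_prime_pow hp.out).mp (hG ▸ W.card_subgroup_dvd_card)
  interval_cases k
  · exact .inl hWk
  · exact .inr (.inl (by simpa using hWk))
  · exact .inr (.inr (W.eq_top_of_card_eq (hWk.trans hG.symm)))

theorem Subgroup.isCoatom_iff_card_eq {W : Subgroup G} : IsCoatom W ↔ Nat.card W = p := by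
  have hp2 : p ≠ p ^ 2 := by have := hp.out.one_lt; nlinarith
  constructor
  · intro hW
    rcases W.card_eq_one_or_eq_prime_or_eq_top hG with hW1 | hWp | hWtop
    · obtain ⟨x, hx⟩ := exists_prime_orderOf_dvd_card' p (hG ▸ dvd_pow_self p two_ne_zero)
      have hx1 : x ≠ 1 := fun h => hp.out.one_lt.ne' (by rw [← hx, h, orderOf_one])
      have hlt : W < zpowers x := by
        rw [card_eq_one.mp hW1, bot_lt_iff_ne_bot, Ne, zpowers_eq_bot]
        exact hx1
      have := congr_arg (fun K : Subgroup G => Nat.card K) (hW.lt_iff.mp hlt)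
      rw [Nat.card_zpowers, hx, card_top, hG] at this
      exact absurd this hp2
    · exact hWp
    · exact absurd hWtop hW.1
  · intro hW
    refine ⟨fun h => hp2 (hW.symm.trans (by rw [h, card_top, hG])), fun K hK => ?_⟩
    rcases K.card_eq_one_or_eq_prime_or_eq_top hG with hK1 | hKp | hKtop
    · have := card_le_of_le hK.le
      rw [hW, hK1] at this
      exact absurd this hp.out.one_lt.not_ge
    · exact absurd (eq_of_le_of_card_ge hK.le (by rw [hW, hKp])) hK.ne
    · exact hKtop

end PrimeSquare

end

theorem Sylow.exists_normal_of_surjective {G H : Type*} [Group G] [Group H] {p : ℕ}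
    (φ : G →* H) (hφ : Function.Surjective φ) (hker : IsPGroup p φ.ker) (S : Sylow p H)
    (hS : (S : Subgroup H).Normal) : ∃ T : Sylow p G, (T : Subgroup G).Normal :=
  ⟨S.comapOfKerIsPGroup φ hker (by simp [φ.range_eq_top_of_surjective hφ]), hS.comap φ⟩

theorem Subgroup.isCoatom_map_of_surjective {G H : Type*} [Group G] [Group H] {φ : G →* H}
    (hφ : Function.Surjective φ) {M : Subgroup G} (hM : IsCoatom M) (hker : φ.ker ≤ M) :
    IsCoatom (M.map φ) := by
  have hcomap : (M.map φ).comap φ = M := comap_map_eq_self hker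
  refine ⟨fun htop => hM.1 (by rw [← hcomap, htop, comap_top]), fun K hK => ?_⟩
  rw [← comap_lt_comap_of_surjective hφ, hcomap, hM.lt_iff] at hK
  rw [← map_comap_eq_self_of_surjective hφ K, hK, map_top_of_surjective φ hφ]

namespace MulAut

variable {G : Type*} [Group G]

def quotientHom (N : Subgroup G) [N.Characteristic] : MulAut G →* MulAut (G ⧸ N) where
  toFun α := QuotientGroup.congr N N α (characteristic_iff_map_eq.mp ‹_› α)
  map_one' := by ext x; induction x using QuotientGroup.induction_on; rfl
  map_mul' _ _ := by ext x; induction x using QuotientGroup.induction_on; rfl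

@[simp]
theorem quotientHom_apply_mk (N : Subgroup G) [N.Characteristic] (α : MulAut G) (x : G) :
    quotientHom N α x = (α x : G ⧸ N) :=
  rfl

theorem map_mk'_smul (N : Subgroup G) [N.Characteristic] (α : MulAut G) (M : Subgroup G) :
    (α • M).map (QuotientGroup.mk' N) = quotientHom N α • M.map (QuotientGroup.mk' N) := by
  change (M.map α.toMonoidHom).map _ = (M.map _).map (quotientHom N α).toMonoidHom
  rw [map_map, map_map]
  rfl

theorem smul_eq_of_quotientHom_smul_eq {N : Subgroup G} [N.Characteristic] {α : MulAut G}
    {M M' : Subgroup G} (hM : N ≤ M) (hM' : N ≤ M')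
    (h : quotientHom N α • M.map (QuotientGroup.mk' N) = M'.map (QuotientGroup.mk' N)) :
    α • M = M' := by
  refine map_injective_of_ker_le (QuotientGroup.mk' N) ?_ (by rwa [QuotientGroup.ker_mk'])
    (by rwa [map_mk'_smul])
  rw [QuotientGroup.ker_mk']
  calc N = N.map α.toMonoidHom := (characteristic_iff_map_eq.mp ‹N.Characteristic› α).symm
    _ ≤ α • M := map_mono hM

end MulAut

section Frattini

variable {G : Type*} [Group G] {N : Subgroup G} [N.Characteristic]
  {q : ℕ} [Fact q.Prime] {Q : Subgroup (MulAut G)}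

theorem exists_mem_fixedPoints_mk_eq (hQ : IsPGroup q Q) (hQN : Q ≤ (MulAut.quotientHom N).ker)
    (hq : ¬ q ∣ Nat.card N) (x : G) :
    ∃ y ∈ FixedPoints.subgroup Q G, (y : G ⧸ N) = x := by
  let fiber : SubMulAction Q G :=
    { carrier := QuotientGroup.mk ⁻¹' {(x : G ⧸ N)}
      smul_mem' := fun g y (hy : (y : G ⧸ N) = x) => by
        change ((g : MulAut G) y : G ⧸ N) = x
        rw [← MulAut.quotientHom_apply_mk, hQN g.2, MulAut.one_apply, hy] }
  have hcard : Nat.card fiber = Nat.card N :=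
    (QuotientGroup.card_preimage_mk N {(x : G ⧸ N)}).trans (by simp)
  obtain ⟨⟨y, hy⟩, hfix⟩ := hQ.nonempty_fixed_point_of_prime_not_dvd_card fiber (hcard ▸ hq)
  exact ⟨y, fun g => congr_arg Subtype.val (hfix g), hy⟩

variable [Finite G]

theorem eq_bot_of_le_ker_quotientHom_frattini (hQ : IsPGroup q Q)
    (hQΦ : Q ≤ (MulAut.quotientHom (frattini G)).ker) (hq : ¬ q ∣ Nat.card (frattini G)) :
    Q = ⊥ := by
  have hsup : FixedPoints.subgroup Q G ⊔ frattini G = ⊤ := by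
    refine eq_top_iff.mpr fun x _ => ?_
    obtain ⟨y, hy, hyx⟩ := exists_mem_fixedPoints_mk_eq hQ hQΦ hq x
    rw [← mul_inv_cancel_left y x]
    exact mul_mem_sup hy (QuotientGroup.eq.mp hyx)
  have hfix : FixedPoints.subgroup Q G = ⊤ := frattini_nongenerating hsup
  refine eq_bot_iff.mpr fun g hg => mem_bot.mpr (MulEquiv.ext fun x => ?_)
  exact (FixedPoints.mem_subgroup _ _ x).mp (hfix ▸ mem_top x) ⟨g, hg⟩

theorem isPGroup_ker_quotientHom_frattini {p : ℕ} [hp : Fact p.Prime] (hG : IsPGroup p G) :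
    IsPGroup p (MulAut.quotientHom (frattini G)).ker := by
  refine IsPGroup.of_card (Nat.eq_prime_pow_of_unique_prime_dvd Nat.card_pos.ne' ?_)
  intro q hq hqK
  have : Fact q.Prime := ⟨hq⟩
  obtain ⟨g, hg⟩ := exists_prime_orderOf_dvd_card' q hqK
  by_contra hqp
  have hcyc : IsPGroup q (zpowers (g : MulAut G)) :=
    IsPGroup.of_card (n := 1) (by rw [Nat.card_zpowers, orderOf_submonoid, hg, pow_one])
  obtain ⟨n, hn⟩ := (hG.to_subgroup (frattini G)).exists_card_eq
  have hqΦ : ¬ q ∣ Nat.card (frattini G) := fun h =>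
    hqp ((Nat.prime_dvd_prime_iff_eq hq hp.out).mp (hq.dvd_of_dvd_pow (hn ▸ h)))
  have hg1 : (g : MulAut G) = 1 := by
    simpa using eq_bot_of_le_ker_quotientHom_frattini hcyc (zpowers_le.mpr g.2) hqΦ
  rw [OneMemClass.coe_eq_one.mp hg1, orderOf_one] at hg
  exact hq.one_lt.ne' hg.symm

end Frattini

namespace MulAut

variable {V : Type*} [CommGroup V]

/-- The endomorphism `σ - 1` of `V`, written multiplicatively. -/
def divId (σ : MulAut V) : V →* V := σ.toMonoidHom / MonoidHom.id V

@[simp]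
theorem divId_apply (σ : MulAut V) (v : V) : σ.divId v = σ v / v := rfl

theorem mem_ker_divId {σ : MulAut V} {v : V} : v ∈ σ.divId.ker ↔ σ v = v := by
  rw [MonoidHom.mem_ker, divId_apply, div_eq_one]

theorem pow_apply_of_range_divId_le_ker {σ : MulAut V} (hσ : σ.divId.range ≤ σ.divId.ker)
    (n : ℕ) (v : V) : (σ ^ n) v = v * σ.divId v ^ n := by
  induction n with
  | zero => simp
  | succ n ih =>
    have hfix : σ (σ.divId v) = σ.divId v := mem_ker_divId.mp (hσ ⟨v, rfl⟩)
    rw [pow_succ', mul_apply, ih, map_mul, map_pow, hfix, pow_succ', ← mul_assoc, divId_apply,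
      mul_div_cancel]

variable [Finite V] {p : ℕ} [hp : Fact p.Prime] (hV : Nat.card V = p ^ 2) {σ : MulAut V}
include hV

theorem card_ker_divId (hσ : IsPGroup p (zpowers σ)) (hσ1 : σ ≠ 1) :
    Nat.card σ.divId.ker = p := by
  have hfix : MulAction.fixedPoints (zpowers σ) V = σ.divId.ker := by
    ext v
    refine ⟨fun h => mem_ker_divId.mpr (h ⟨σ, mem_zpowers σ⟩), fun h g => ?_⟩
    exact (zpowers_le (H := MulAction.stabilizer (MulAut V) v)).mpr (mem_ker_divId.mp h) g.2
  have hmod := hσ.card_modEq_card_fixedPoints V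
  rw [hfix, hV] at hmod
  have hdvd : p ∣ Nat.card σ.divId.ker := Nat.modEq_zero_iff_dvd.mp <|
    hmod.symm.trans (Nat.modEq_zero_iff_dvd.mpr (dvd_pow_self p two_ne_zero))
  rcases σ.divId.ker.card_eq_one_or_eq_prime_or_eq_top hV with h1 | hp' | htop
  · exact absurd (h1 ▸ hdvd) hp.out.not_dvd_one
  · exact hp'
  · exact absurd (MulEquiv.ext fun v => mem_ker_divId.mp (htop ▸ mem_top v)) hσ1

theorem range_divId_le_ker (hσ : IsPGroup p (zpowers σ)) : σ.divId.range ≤ σ.divId.ker := by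
  rcases eq_or_ne σ 1 with rfl | hσ1
  · rintro _ ⟨v, rfl⟩
    simp
  have hR : Nat.card σ.divId.range = p := by
    have := σ.divId.ker.card_mul_index
    rw [Subgroup.index_ker, card_ker_divId hV hσ hσ1, hV, sq] at this
    exact Nat.eq_of_mul_eq_mul_left hp.out.pos this
  rintro _ ⟨v, rfl⟩
  rcases eq_or_ne (σ.divId v) 1 with h1 | h1
  · exact h1 ▸ one_mem _
  -- `σ` permutes the `p - 1` nontrivial elements of its image, and a `p`-group cannot move them.
  refine mem_ker_divId.mpr (hσ.smul_eq_of_orbit_subset (s := (σ.divId.range : Set V) \ {1})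
    (Set.toFinite _) ?_ ?_ ⟨σ, mem_zpowers σ⟩)
  · rw [Set.ncard_sdiff_singleton_of_mem (one_mem _), ← Nat.card_coe_set_eq]
    change Nat.card σ.divId.range - 1 < p
    have := hp.out.pos
    omega
  · rintro _ ⟨g, rfl⟩
    obtain ⟨k, hk⟩ := mem_zpowers_iff.mp g.2
    refine ⟨⟨(σ ^ k) v, ?_⟩, fun h => h1 ?_⟩
    · change σ ((σ ^ k) v) / (σ ^ k) v = (g : MulAut V) (σ v / v)
      rw [← hk, map_div, ← mul_apply, ← mul_apply, (Commute.self_zpow σ k).eq]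
    · simpa using congr_arg (g⁻¹ • ·) h

variable (hσ : IsPGroup p (zpowers σ)) (hσ1 : σ ≠ 1)
include hσ hσ1

theorem exists_pow_apply_eq_mul {y z : V} (hy : y ∉ σ.divId.ker) (hz : z ∈ σ.divId.ker) :
    ∃ i : ℕ, (σ ^ i) y = y * z := by
  have hK : σ.divId.ker = zpowers (σ.divId y) :=
    eq_zpowers_of_card_eq_prime (card_ker_divId hV hσ hσ1) (range_divId_le_ker hV hσ ⟨y, rfl⟩) hy
  obtain ⟨i, hi⟩ := (Submonoid.mem_powers_iff _ _).mp (mem_powers_iff_mem_zpowers.mpr (hK ▸ hz))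
  exact ⟨i, by rw [pow_apply_of_range_divId_le_ker (range_divId_le_ker hV hσ), hi]⟩

theorem exists_pow_smul_eq {L L' : Subgroup V} (hL : IsCoatom L) (hL' : IsCoatom L')
    (hLK : L ≠ σ.divId.ker) (hL'K : L' ≠ σ.divId.ker) : ∃ i : ℕ, σ ^ i • L = L' := by
  have hK : IsCoatom σ.divId.ker := (isCoatom_iff_card_eq hV).mpr (card_ker_divId hV hσ hσ1)
  obtain ⟨v, hvL', hvK⟩ : ∃ v ∈ L', v ∉ σ.divId.ker :=
    SetLike.not_le_iff_exists.mp fun h => hL'K ((hL'.le_iff_eq hK.1).mp h).symm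
  obtain ⟨y, hyL, z, hzK, rfl⟩ := mem_sup.mp ((hL.sup_eq_top_of_ne hK hLK).symm ▸ mem_top v)
  have hyK : y ∉ σ.divId.ker := fun hy => hvK (mul_mem hy hzK)
  have hy1 : y ≠ 1 := fun h => hyK (h ▸ one_mem _)
  have hv1 : y * z ≠ 1 := fun h => hvK (h ▸ one_mem _)
  obtain ⟨i, hi⟩ := exists_pow_apply_eq_mul hV hσ hσ1 hyK hzK
  refine ⟨i, ?_⟩
  rw [eq_zpowers_of_card_eq_prime ((isCoatom_iff_card_eq hV).mp hL) hyL hy1,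
    eq_zpowers_of_card_eq_prime ((isCoatom_iff_card_eq hV).mp hL') hvL' hv1, ← hi]
  exact MonoidHom.map_zpowers _ y

theorem mem_zpowers_of_ker_divId_eq {τ : MulAut V} (hτ : IsPGroup p (zpowers τ))
    (hστ : σ.divId.ker = τ.divId.ker) : τ ∈ zpowers σ := by
  have hK : IsCoatom σ.divId.ker := (isCoatom_iff_card_eq hV).mpr (card_ker_divId hV hσ hσ1)
  obtain ⟨v, hv⟩ : ∃ v, v ∉ σ.divId.ker := SetLike.exists_not_mem_of_ne_top _ hK.1
  have hτv : τ.divId v ∈ σ.divId.ker := hστ ▸ range_divId_le_ker hV hτ ⟨v, rfl⟩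
  obtain ⟨i, hi⟩ := exists_pow_apply_eq_mul hV hσ hσ1 hv hτv
  have hagree :
      zpowers v ⊔ σ.divId.ker ≤ MonoidHom.eqLocus (σ ^ i).toMonoidHom τ.toMonoidHom := by
    refine sup_le (zpowers_le.mpr ?_) fun x hx => ?_
    · change (σ ^ i) v = τ v
      rw [hi, divId_apply, mul_div_cancel]
    · change (σ ^ i) x = τ x
      rw [pow_apply_of_range_divId_le_ker (range_divId_le_ker hV hσ), MonoidHom.mem_ker.mp hx,
        one_pow, mul_one]
      exact (mem_ker_divId.mp (hστ ▸ hx)).symm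
  have htop : zpowers v ⊔ σ.divId.ker = ⊤ :=
    (hK.le_iff.mp le_sup_right).resolve_right fun h => hv (h ▸ mem_sup_left (mem_zpowers v))
  have hτσ : σ ^ i = τ := MulEquiv.ext fun x => hagree (htop ▸ mem_top x)
  exact hτσ ▸ pow_mem (mem_zpowers σ) i

end MulAut

section PrimeSquare

variable {V : Type*} [CommGroup V] [Finite V] {p : ℕ} [hp : Fact p.Prime]
  (hV : Nat.card V = p ^ 2)
include hV

open MulAut

theorem exists_isCoatom_ne_ne (hexp : ∀ v : V, v ^ p = 1) {K₁ K₂ : Subgroup V}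
    (h₁ : IsCoatom K₁) (h₂ : IsCoatom K₂) (hne : K₁ ≠ K₂) :
    ∃ L : Subgroup V, IsCoatom L ∧ L ≠ K₁ ∧ L ≠ K₂ := by
  have hcard₁ := (isCoatom_iff_card_eq hV).mp h₁
  have hcard₂ := (isCoatom_iff_card_eq hV).mp h₂
  have hdisj {x : V} (hx1 : x ≠ 1) (hx₁ : x ∈ K₁) (hx₂ : x ∈ K₂) : False :=
    hne ((eq_zpowers_of_card_eq_prime hcard₁ hx₁ hx1).trans
      (eq_zpowers_of_card_eq_prime hcard₂ hx₂ hx1).symm)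
  have hnt {K : Subgroup V} (hK : Nat.card K = p) : ∃ x ∈ K, x ≠ 1 :=
    K.bot_or_exists_ne_one.resolve_left fun h => hp.out.ne_one (by rw [← hK, h, card_bot])
  obtain ⟨x₁, hx₁, hx₁1⟩ := hnt hcard₁
  obtain ⟨x₂, hx₂, hx₂1⟩ := hnt hcard₂
  have hx : x₁ * x₂ ≠ 1 := fun h =>
    hdisj hx₂1 (eq_inv_of_mul_eq_one_right h ▸ inv_mem hx₁) hx₂
  refine ⟨zpowers (x₁ * x₂), (isCoatom_iff_card_eq hV).mpr ?_, fun h => ?_, fun h => ?_⟩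
  · rw [Nat.card_zpowers, orderOf_eq_prime (hexp _) hx]
  · exact hdisj hx₂1 (inv_mul_cancel_left x₁ x₂ ▸ mul_mem (inv_mem hx₁) (h ▸ mem_zpowers _)) hx₂
  · exact hdisj hx₁1 hx₁ (mul_inv_cancel_right x₁ x₂ ▸ mul_mem (h ▸ mem_zpowers _) (inv_mem hx₂))

theorem isCoatom_eq_of_pow_ne_one {v : V} (hv : v ^ p ≠ 1) {M M' : Subgroup V}
    (hM : IsCoatom M) (hM' : IsCoatom M') : M = M' := by
  have hT : (powMonoidHom p : V →* V).ker ≠ ⊤ := fun h => hv (h ▸ mem_top v :)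
  have hle {N : Subgroup V} (hN : IsCoatom N) : N = (powMonoidHom p : V →* V).ker := by
    refine ((hN.le_iff_eq hT).mp fun x hx => ?_).symm
    have := pow_card_eq_one' (x := (⟨x, hx⟩ : N))
    rw [(isCoatom_iff_card_eq hV).mp hN] at this
    exact congr_arg Subtype.val this
  rw [hle hM, hle hM']

theorem exists_ker_divId_ne_of_not_normal_sylow {A : Subgroup (MulAut V)}
    (hA : ¬ ∃ S : Sylow p A, (S : Subgroup A).Normal) :
    ∃ σ ∈ A, ∃ τ ∈ A, IsPGroup p (zpowers σ) ∧ σ ≠ 1 ∧ IsPGroup p (zpowers τ) ∧ τ ≠ 1 ∧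
      σ.divId.ker ≠ τ.divId.ker := by
  by_contra! h
  obtain ⟨S⟩ : Nonempty (Sylow p A) := inferInstance
  have hpelt : ∀ T : Sylow p A, ∀ t ∈ T, IsPGroup p (zpowers (t : MulAut V)) := fun T t ht =>
    (T.2.map A.subtype).to_le (zpowers_le.mpr ⟨t, ht, rfl⟩)
  rcases (S : Subgroup A).bot_or_exists_ne_one with hS | ⟨σ, hσS, hσ1⟩
  · exact hA ⟨S, hS ▸ normal_bot⟩
  have hσp := hpelt S σ hσS
  have hσ1' : (σ : MulAut V) ≠ 1 := fun h => hσ1 (Subtype.ext h)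
  -- All `p`-elements of `A` lie in the cyclic `p`-group generated by `σ`, so it is the only Sylow.
  have hQ : IsPGroup p ((zpowers (σ : MulAut V)).subgroupOf A) := hσp.comap_subtype
  have hle (T : Sylow p A) : (T : Subgroup A) ≤ (zpowers (σ : MulAut V)).subgroupOf A := by
    intro t ht
    rcases eq_or_ne t 1 with rfl | ht1
    · exact one_mem _
    have htp := hpelt T t ht
    exact mem_subgroupOf.mpr (mem_zpowers_of_ker_divId_eq hV hσp hσ1' htp
      (h σ σ.2 t t.2 hσp hσ1' htp fun h => ht1 (Subtype.ext h)))
  have : Subsingleton (Sylow p A) :=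
    ⟨fun T T' => Sylow.ext ((T.3 hQ (hle T)).symm.trans (T'.3 hQ (hle T')))⟩
  exact hA ⟨S, S.normal_of_subsingleton⟩

theorem exists_smul_eq_of_forall_pow_eq_one (hexp : ∀ v : V, v ^ p = 1)
    {A : Subgroup (MulAut V)} (hA : ¬ ∃ S : Sylow p A, (S : Subgroup A).Normal)
    {M M' : Subgroup V} (hM : IsCoatom M) (hM' : IsCoatom M') : ∃ α ∈ A, α • M = M' := by
  obtain ⟨σ, hσA, τ, hτA, hσ, hσ1, hτ, hτ1, hne⟩ := exists_ker_divId_ne_of_not_normal_sylow hV hA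
  have hKσ := (isCoatom_iff_card_eq hV).mpr (card_ker_divId hV hσ hσ1)
  have hKτ := (isCoatom_iff_card_eq hV).mpr (card_ker_divId hV hτ hτ1)
  obtain ⟨L, hL, hLσ, hLτ⟩ := exists_isCoatom_ne_ne hV hexp hKσ hKτ hne
  have hreach {N : Subgroup V} (hN : IsCoatom N) : ∃ α ∈ A, α • N = L := by
    by_cases hNσ : N = σ.divId.ker
    · obtain ⟨i, hi⟩ := exists_pow_smul_eq hV hτ hτ1 hN hL (hNσ ▸ hne) hLτ
      exact ⟨τ ^ i, pow_mem hτA i, hi⟩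
    · obtain ⟨i, hi⟩ := exists_pow_smul_eq hV hσ hσ1 hN hL hNσ hLσ
      exact ⟨σ ^ i, pow_mem hσA i, hi⟩
  obtain ⟨α, hαA, hα⟩ := hreach hM
  obtain ⟨β, hβA, hβ⟩ := hreach hM'
  exact ⟨β⁻¹ * α, mul_mem (inv_mem hβA) hαA, by rw [mul_smul, hα, ← hβ, inv_smul_smul]⟩

theorem exists_smul_eq_of_not_normal_sylow {A : Subgroup (MulAut V)}
    (hA : ¬ ∃ S : Sylow p A, (S : Subgroup A).Normal) {M M' : Subgroup V} (hM : IsCoatom M)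
    (hM' : IsCoatom M') : ∃ α ∈ A, α • M = M' := by
  by_cases hexp : ∀ v : V, v ^ p = 1
  · exact exists_smul_eq_of_forall_pow_eq_one hV hexp hA hM hM'
  · obtain ⟨v, hv⟩ := not_forall.mp hexp
    exact ⟨1, one_mem A, by rw [one_smul, isCoatom_eq_of_pow_ne_one hV hv hM hM']⟩

end PrimeSquare

theorem stmt_8 {P : Type*} [Group P] [Finite P] (p : ℕ) [Fact p.Prime]
    (hpgrp : IsPGroup p P) (hfr : Nat.card (P ⧸ frattini P) = p ^ 2)
    (A : Subgroup (MulAut P))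
    (hA : ¬ ∃ Q : Sylow p A, (Q : Subgroup A).Normal) :
    (∀ M M' : Subgroup P, IsCoatom M → IsCoatom M' →
      ∃ α ∈ A, M.map α.toMonoidHom = M') ∧
    (∀ M M' : Subgroup P, IsCoatom M → IsCoatom M' → Nonempty (M ≃* M')) := by
  let : CommGroup (P ⧸ frattini P) :=
    { mul_comm := (IsPGroup.isMulCommutative_of_card_eq_prime_sq hfr).is_comm.comm }
  let f := (MulAut.quotientHom (frattini P)).comp A.subtype
  have hker : IsPGroup p f.rangeRestrict.ker := by
    rw [MonoidHom.ker_rangeRestrict, ← MonoidHom.comap_ker]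
    exact (isPGroup_ker_quotientHom_frattini hpgrp).comap_subtype
  have hĀ : ¬ ∃ S : Sylow p f.range, (S : Subgroup f.range).Normal := fun ⟨S, hS⟩ =>
    hA (Sylow.exists_normal_of_surjective _ f.rangeRestrict_surjective hker S hS)
  have hcoatom {M : Subgroup P} (hM : IsCoatom M) : IsCoatom (M.map (QuotientGroup.mk' _)) :=
    isCoatom_map_of_surjective (QuotientGroup.mk'_surjective _) hM
      ((QuotientGroup.ker_mk' _).trans_le (frattini_le_coatom hM))
  have htrans (M M' : Subgroup P) (hM : IsCoatom M) (hM' : IsCoatom M') :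
      ∃ α ∈ A, M.map α.toMonoidHom = M' := by
    obtain ⟨_, ⟨α, rfl⟩, h⟩ := exists_smul_eq_of_not_normal_sylow hfr hĀ (hcoatom hM) (hcoatom hM')
    exact ⟨α, α.2, MulAut.smul_eq_of_quotientHom_smul_eq (frattini_le_coatom hM)
      (frattini_le_coatom hM') h⟩
  refine ⟨htrans, fun M M' hM hM' => ?_⟩
  obtain ⟨α, -, h⟩ := htrans M M' hM hM'
  exact ⟨(M.equivMapOfInjective _ α.injective).trans (MulEquiv.subgroupCongr h)⟩
end

section
/- Let p be a prime, P a nonabelian group of order p^3, and α an automorphism of P stabilizing a subgroup chain 1 < U < M < P with U = Z(P) (so U has order p, M has order p^2, α(U) = U and α(M) = M). Suppose there are integers n, m, k such that α(x)·x^{−n} ∈ M for all x ∈ P, α(y)·y^{−m} ∈ U for all y ∈ M, and α(z) = z^k for all z ∈ U. Then k ≡ nm (mod p). -/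
private lemma central_conj' {G : Type*} [Group G] (b X : G) (hb : X * b = b * X) :
    b * X * b⁻¹ = X := by rw [← hb]; group

private lemma aux_right_shift {G : Type*} [Group G] (u v b : G) (hb : ∀ g, g * b = b * g) :
    u * (b * v) * u⁻¹ * (b * v)⁻¹ = u * v * u⁻¹ * v⁻¹ := by
  rw [show u * (b * v) * u⁻¹ * (b * v)⁻¹ = (u * b) * (v * u⁻¹ * v⁻¹ * b⁻¹) by group, hb u]
  calc (b * u) * (v * u⁻¹ * v⁻¹ * b⁻¹) = b * (u * v * u⁻¹ * v⁻¹) * b⁻¹ := by group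
  _ = u * v * u⁻¹ * v⁻¹ := central_conj' _ _ (hb _)

private lemma aux_mul_left {G : Type*} [Group G] (a x y w1 w2 : G)
    (hw2 : ∀ g, g * w2 = w2 * g)
    (h1 : a * y * a⁻¹ * y⁻¹ = w1) (h2 : x * y * x⁻¹ * y⁻¹ = w2) :
    (a * x) * y * (a * x)⁻¹ * y⁻¹ = w1 * w2 := by
  have hx : x * y = w2 * y * x := by rw [← h2]; group
  calc (a * x) * y * (a * x)⁻¹ * y⁻¹ = a * (x * y) * x⁻¹ * a⁻¹ * y⁻¹ := by group
  _ = a * (w2 * y * x) * x⁻¹ * a⁻¹ * y⁻¹ := by rw [hx]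
  _ = (a * w2) * (y * a⁻¹ * y⁻¹) := by group
  _ = w2 * (a * y * a⁻¹ * y⁻¹) := by rw [hw2 a]; group
  _ = w2 * w1 := by rw [h1]
  _ = w1 * w2 := (hw2 w1).symm

private lemma aux_zpow_right {G : Type*} [Group G] (x y w : G) (hw : ∀ g, g * w = w * g)
    (h : x * y * x⁻¹ * y⁻¹ = w) (j : ℤ) : x * y ^ j * x⁻¹ * (y ^ j)⁻¹ = w ^ j := by
  have hc : x * y * x⁻¹ = w * y := by rw [← h]; group
  have hcw : Commute w y := (hw y).symm
  have hcj : x * y ^ j * x⁻¹ = w ^ j * y ^ j := by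
    have h0 : x * y ^ j * x⁻¹ = (x * y * x⁻¹) ^ j := by
      have := map_zpow (MulAut.conj x) y j
      simpa [MulAut.conj_apply, mul_assoc] using this
    rw [h0, hc, hcw.mul_zpow]
  rw [show x * y ^ j * x⁻¹ * (y ^ j)⁻¹ = (x * y ^ j * x⁻¹) * (y ^ j)⁻¹ by group, hcj]
  group

private lemma aux_zpow_left {G : Type*} [Group G] (x y w : G) (hw : ∀ g, g * w = w * g)
    (h : x * y * x⁻¹ * y⁻¹ = w) (j : ℤ) : x ^ j * y * (x ^ j)⁻¹ * y⁻¹ = w ^ j := by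
  have h' : y * x * y⁻¹ * x⁻¹ = w⁻¹ := by rw [← h]; group
  have hw' : ∀ g, g * w⁻¹ = w⁻¹ * g := by
    intro g
    calc g * w⁻¹ = w⁻¹ * (w * g) * w⁻¹ := by group
    _ = w⁻¹ * (g * w) * w⁻¹ := by rw [← hw g]
    _ = w⁻¹ * g := by group
  have hr := aux_zpow_right y x w⁻¹ hw' h' j
  calc x ^ j * y * (x ^ j)⁻¹ * y⁻¹ = (y * x ^ j * y⁻¹ * (x ^ j)⁻¹)⁻¹ := by group
  _ = ((w⁻¹) ^ j)⁻¹ := by rw [hr]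
  _ = w ^ j := by rw [inv_zpow, inv_inv]

theorem stmt_10 {P : Type*} [Group P] [Finite P] (p : ℕ) (hp : p.Prime)
    (hcard : Nat.card P = p ^ 3) (hnonab : ∃ x y : P, x * y ≠ y * x)
    (α : MulAut P) (U M : Subgroup P)
    (hU : U = Subgroup.center P)
    (hchain : ⊥ < U ∧ U < M ∧ M < ⊤)
    (hUinv : U.map α.toMonoidHom = U) (hMinv : M.map α.toMonoidHom = M)
    (n m k : ℤ)
    (hn : ∀ x : P, α x * (x ^ n)⁻¹ ∈ M)
    (hm : ∀ y ∈ M, α y * (y ^ m)⁻¹ ∈ U)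
    (hk : ∀ z ∈ U, α z = z ^ k) :
    k ≡ n * m [ZMOD (p : ℤ)] := by
  haveI : Fact p.Prime := ⟨hp⟩
  obtain ⟨hbU, hUM, hMT⟩ := hchain
  subst hU
  set U := Subgroup.center P with hUdef
  -- cardinalities
  obtain ⟨i, hi3, hiU⟩ := (Nat.dvd_prime_pow hp).mp (hcard ▸ Subgroup.card_subgroup_dvd_card U)
  obtain ⟨j, hj3, hjM⟩ := (Nat.dvd_prime_pow hp).mp (hcard ▸ Subgroup.card_subgroup_dvd_card M)
  have hUne : Nat.card U ≠ 1 := by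
    intro h
    exact hbU.ne' (Subgroup.card_eq_one.mp h)
  have hUltM : Nat.card U < Nat.card M := by
    refine lt_of_le_of_ne (Subgroup.card_le_of_le hUM.le) fun h => hUM.ne ?_
    exact Subgroup.eq_of_le_of_card_ge hUM.le h.ge
  have hMne : M ≠ ⊤ := hMT.ne
  have hj2 : j ≠ 3 := by
    intro h
    exact hMne (Subgroup.eq_top_of_card_eq M (by rw [hjM, h, hcard]))
  have hij : i < j := by
    rw [hiU, hjM] at hUltM
    exact (pow_lt_pow_iff_right₀ hp.one_lt).mp hUltM
  have hi1 : 1 ≤ i := by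
    rcases Nat.eq_zero_or_pos i with h | h
    · exact absurd (by rw [hiU, h, pow_zero]) hUne
    · exact h
  have hi : i = 1 := by omega
  have hj : j = 2 := by omega
  have cardU : Nat.card U = p := by rw [hiU, hi, pow_one]
  have cardM : Nat.card M = p ^ 2 := by rw [hjM, hj]
  have cardQ : Nat.card (P ⧸ U) = p ^ 2 := by
    have h1 := Subgroup.card_eq_card_quotient_mul_card_subgroup U
    rw [hcard, cardU] at h1
    have hp0 : 0 < p := hp.pos
    have : p ^ 3 = p ^ 2 * p := by ring
    rw [this] at h1
    exact (Nat.eq_of_mul_eq_mul_right hp0 h1.symm)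
  -- abelian facts
  have hMab : ∀ a b : P, a ∈ M → b ∈ M → a * b = b * a := by
    intro a b ha hb
    have := IsPGroup.commutative_of_card_eq_prime_sq (p := p) cardM ⟨a, ha⟩ ⟨b, hb⟩
    exact congrArg Subtype.val this
  have hQab := IsPGroup.commutative_of_card_eq_prime_sq (p := p) cardQ
  -- every commutator lies in the center
  have hcomm_mem : ∀ a b : P, a * b * a⁻¹ * b⁻¹ ∈ U := by
    intro a b
    rw [← QuotientGroup.eq_one_iff]
    have hcast : ((a * b * a⁻¹ * b⁻¹ : P) : P ⧸ U)
        = (a : P ⧸ U) * (b : P ⧸ U) * (a : P ⧸ U)⁻¹ * (b : P ⧸ U)⁻¹ := rfl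
    rw [hcast, hQab (a : P ⧸ U) (b : P ⧸ U)]
    group
  -- choose x ∉ M and y ∈ M not commuting with x
  obtain ⟨x, -, hxM⟩ := SetLike.exists_of_lt hMT
  have hex : ∃ y ∈ M, x * y ≠ y * x := by
    by_contra h
    push_neg at h
    have hle : M ≤ Subgroup.centralizer {x} := by
      intro y hy
      rw [Subgroup.mem_centralizer_iff]
      rintro g rfl
      exact h y hy
    have hxc : x ∈ Subgroup.centralizer {x} := by
      rw [Subgroup.mem_centralizer_iff]; rintro g rfl; rfl
    have hlt : M < Subgroup.centralizer {x} := lt_of_le_of_ne hle fun h => hxM (h ▸ hxc)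
    obtain ⟨c, hc3, hcC⟩ := (Nat.dvd_prime_pow hp).mp
      (hcard ▸ Subgroup.card_subgroup_dvd_card (Subgroup.centralizer {x}))
    have hMltC : Nat.card M < Nat.card (Subgroup.centralizer ({x} : Set P)) := by
      refine lt_of_le_of_ne (Subgroup.card_le_of_le hlt.le) fun h => hlt.ne ?_
      exact Subgroup.eq_of_le_of_card_ge hlt.le h.ge
    rw [cardM, hcC] at hMltC
    have hc : c = 3 := by
      have := (pow_lt_pow_iff_right₀ hp.one_lt).mp hMltC
      omega
    have hCtop : Subgroup.centralizer ({x} : Set P) = ⊤ :=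
      Subgroup.eq_top_of_card_eq _ (by rw [hcC, hc, hcard])
    have hxcen : x ∈ U := by
      rw [hUdef, Subgroup.mem_center_iff]
      intro g
      have hg : g ∈ Subgroup.centralizer ({x} : Set P) := hCtop ▸ Subgroup.mem_top g
      exact (Subgroup.mem_centralizer_iff.mp hg x rfl).symm
    exact hxM (hUM.le hxcen)
  obtain ⟨y, hyM, hxy⟩ := hex
  set z := x * y * x⁻¹ * y⁻¹ with hzdef
  have hzU : z ∈ U := hcomm_mem x y
  have hzc : ∀ g, g * z = z * g := fun g => Subgroup.mem_center_iff.mp hzU g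
  have hz1 : z ≠ 1 := by
    intro h
    apply hxy
    calc x * y = (x * y * x⁻¹ * y⁻¹) * (y * x) := by group
    _ = y * x := by rw [← hzdef, h, one_mul]
  -- decompose α x and α y
  set a := α x * (x ^ n)⁻¹ with hadef
  have haM : a ∈ M := hn x
  have hax : α x = a * x ^ n := by rw [hadef]; group
  set b := α y * (y ^ m)⁻¹ with hbdef
  have hbU : b ∈ U := hm y hyM
  have hbc : ∀ g, g * b = b * g := fun g => Subgroup.mem_center_iff.mp hbU g
  have hay : α y = b * y ^ m := by rw [hbdef]; group
  -- central commutator computations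
  have step1 : x * y ^ m * x⁻¹ * (y ^ m)⁻¹ = z ^ m :=
    aux_zpow_right x y z hzc rfl m
  have hzmc : ∀ g, g * z ^ m = z ^ m * g := by
    intro g
    have : Commute z g := (hzc g).symm
    exact ((this.zpow_left m)).symm
  have step2 : x ^ n * y ^ m * (x ^ n)⁻¹ * (y ^ m)⁻¹ = (z ^ m) ^ n :=
    aux_zpow_left x (y ^ m) (z ^ m) hzmc step1 n
  have step3 : a * y ^ m * a⁻¹ * (y ^ m)⁻¹ = 1 := by
    rw [hMab a (y ^ m) haM (M.zpow_mem hyM m)]; group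
  have hzmnc : ∀ g, g * (z ^ m) ^ n = (z ^ m) ^ n * g := by
    intro g
    have : Commute (z ^ m) g := (hzmc g).symm
    exact ((this.zpow_left n)).symm
  have step4 : (a * x ^ n) * y ^ m * (a * x ^ n)⁻¹ * (y ^ m)⁻¹ = 1 * (z ^ m) ^ n :=
    aux_mul_left a (x ^ n) (y ^ m) 1 ((z ^ m) ^ n) hzmnc step3 step2
  have step5 : (a * x ^ n) * (b * y ^ m) * (a * x ^ n)⁻¹ * (b * y ^ m)⁻¹ = (z ^ m) ^ n := by
    rw [aux_right_shift (a * x ^ n) (y ^ m) b hbc, step4, one_mul]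
  have hαz : α z = z ^ (m * n) := by
    have : α z = α x * α y * (α x)⁻¹ * (α y)⁻¹ := by
      rw [hzdef]; simp [map_mul, map_inv, mul_assoc]
    rw [this, hax, hay, step5, ← zpow_mul]
  have hzk : z ^ k = z ^ (m * n) := by rw [← hk z hzU, hαz]
  -- order of z is p
  have hord : orderOf z = p := by
    have hdvd : orderOf z ∣ p := cardU ▸ Subgroup.orderOf_dvd_natCard U hzU
    rcases (Nat.Prime.eq_one_or_self_of_dvd hp _ hdvd) with h | h
    · exact absurd (orderOf_eq_one_iff.mp h) hz1
    · exact h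
  have hmod : k ≡ m * n [ZMOD (orderOf z : ℕ)] := zpow_eq_zpow_iff_modEq.mp hzk
  rw [hord] at hmod
  simpa [mul_comm] using hmod
end

section
/- Let p be a prime, P a nonabelian group of order p^3, and α an automorphism of P stabilizing a subgroup chain 1 < U < M < P with U ≠ Z(P) (so U has order p, M has order p^2, α(U) = U and α(M) = M). Suppose there are integers n, m, k such that α(x)·x^{−n} ∈ M for all x ∈ P, α(y)·y^{−m} ∈ U for all y ∈ M, and α(z) = z^k for all z ∈ U. Then m ≡ nk (mod p). -/
/-!
Since `P ⧸ Z(P)` has order `p ^ 2`, it is abelian, so every commutator of `P` is central and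
`⁅·, ·⁆` is bimultiplicative. Pick `u ≠ 1` in `U` and `x` with `c = ⁅x, u⁆ ≠ 1`; then
`c ∈ Z(P)` has order `p`. Writing `α x = w * x ^ n` with `w` in the abelian group `M`, one gets
`α c = ⁅w * x ^ n, u ^ k⁆ = c ^ (n * k)`. On the other hand `c ∈ M` (which is normal), so
`α c * (c ^ m)⁻¹` lies in `U ⊓ Z(P) = ⊥`, whence `c ^ (n * k - m) = 1` and `p ∣ n * k - m`.
-/

open Subgroup
open scoped commutatorElement

section Commutator

variable {G : Type*} [Group G] {x u : G}

theorem commutatorElement_zpow_right_of_mem_center (h : ⁅x, u⁆ ∈ center G) (b : ℤ) :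
    ⁅x, u ^ b⁆ = ⁅x, u⁆ ^ b := by
  have hconj : x * u * x⁻¹ = ⁅x, u⁆ * u := by rw [commutatorElement_def]; group
  have hcomm : Commute ⁅x, u⁆ u := (mem_center_iff.mp h u).symm
  rw [commutatorElement_def, ← conj_zpow, hconj, hcomm.mul_zpow, mul_inv_cancel_right]

theorem commutatorElement_zpow_left_of_mem_center (h : ⁅x, u⁆ ∈ center G) (a : ℤ) :
    ⁅x ^ a, u⁆ = ⁅x, u⁆ ^ a := by
  have h' : ⁅u, x⁆ ∈ center G := commutatorElement_inv x u ▸ inv_mem h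
  rw [← commutatorElement_inv, commutatorElement_zpow_right_of_mem_center h', ← commutatorElement_inv,
    inv_zpow, inv_inv]

theorem commutatorElement_zpow_zpow_of_mem_center (h : ⁅x, u⁆ ∈ center G) (a b : ℤ) :
    ⁅x ^ a, u ^ b⁆ = ⁅x, u⁆ ^ (a * b) := by
  have h' : ⁅x, u ^ b⁆ ∈ center G :=
    commutatorElement_zpow_right_of_mem_center h b ▸ zpow_mem h b
  rw [commutatorElement_zpow_left_of_mem_center h', commutatorElement_zpow_right_of_mem_center h,
    ← zpow_mul, mul_comm]

theorem commutatorElement_mul_left_of_commute {w y v : G} (hwv : Commute w v)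
    (h : ⁅y, v⁆ ∈ center G) : ⁅w * y, v⁆ = ⁅y, v⁆ := by
  rw [commutatorElement_mul_left_eq_conj_mul, commutatorElement_eq_one_iff_commute.mpr hwv,
    mul_one, mem_center_iff.mp h w, mul_inv_cancel_right]

theorem map_commutatorElement_eq_zpow_of_mem {M : Subgroup G} [IsMulCommutative M]
    (hcentral : ∀ g h : G, ⁅g, h⁆ ∈ center G) (f : G →* G) {n k : ℤ}
    (hx : f x * (x ^ n)⁻¹ ∈ M) (hu : u ∈ M) (hfu : f u = u ^ k) :
    f ⁅x, u⁆ = ⁅x, u⁆ ^ (n * k) := by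
  have hw : Commute (f x * (x ^ n)⁻¹) (u ^ k) :=
    congrArg Subtype.val ((IsMulCommutative.is_comm (M := M)).comm ⟨_, hx⟩ ⟨_, zpow_mem hu k⟩)
  rw [map_commutatorElement, hfu, ← inv_mul_cancel_right (f x) (x ^ n),
    commutatorElement_mul_left_of_commute hw (hcentral _ _),
    commutatorElement_zpow_zpow_of_mem_center (hcentral x u)]

end Commutator

section PrimeCard

variable {G : Type*} [Group G] {p : ℕ} [Fact p.Prime]

theorem Subgroup.card_lt_card_of_lt [Finite G] {H K : Subgroup G} (h : H < K) : Nat.card H < Nat.card K :=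
  (card_le_of_le h.le).lt_of_ne fun he => h.ne (eq_of_le_of_card_ge h.le he.ge)

theorem Subgroup.inf_eq_bot_of_card_eq_prime [Finite G] {H K : Subgroup G} (hH : Nat.card H = p)
    (hK : Nat.card K = p) (hne : H ≠ K) : H ⊓ K = ⊥ := by
  have hdvd : Nat.card (H ⊓ K : Subgroup G) ∣ p := hH ▸ card_dvd_of_le inf_le_left
  refine card_eq_one.mp (((Nat.dvd_prime Fact.out).mp hdvd).resolve_right fun hp => hne ?_)
  exact (eq_of_le_of_card_ge inf_le_left (hH ▸ hp.ge)).symm.trans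
    (eq_of_le_of_card_ge inf_le_right (hK ▸ hp.ge))

theorem orderOf_eq_prime_of_mem {H : Subgroup G} (hH : Nat.card H = p) {c : G} (hc : c ∈ H)
    (hc1 : c ≠ 1) : orderOf c = p := by
  refine orderOf_eq_prime ?_ hc1
  have hcp := pow_card_eq_one' (x := (⟨c, hc⟩ : H))
  rw [hH] at hcp
  exact congrArg Subtype.val hcp

end PrimeCard

section PrimeCube

variable {P : Type*} [Group P] {p : ℕ} [Fact p.Prime]

theorem Subgroup.normal_of_card_eq_prime_pow_pred [Finite P] {n : ℕ}
    (hcard : Nat.card P = p ^ (n + 1)) {H : Subgroup P} (hH : Nat.card H = p ^ n) : H.Normal := by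
  have hp : p.Prime := Fact.out
  refine normal_of_index_eq_minFac_card ?_
  rw [hcard, hp.pow_minFac n.succ_ne_zero]
  have := H.card_mul_index
  rw [hH, hcard, pow_succ] at this
  exact Nat.eq_of_mul_eq_mul_left (pow_pos hp.pos n) this

theorem Subgroup.card_eq_of_bot_lt_lt_lt_top [Finite P] (hcard : Nat.card P = p ^ 3)
    {U M : Subgroup P} (h : ⊥ < U ∧ U < M ∧ M < ⊤) : Nat.card U = p ∧ Nat.card M = p ^ 2 := by
  have hp : p.Prime := Fact.out
  obtain ⟨a, -, ha⟩ := (Nat.dvd_prime_pow hp).mp (hcard ▸ card_subgroup_dvd_card U)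
  obtain ⟨b, -, hb⟩ := (Nat.dvd_prime_pow hp).mp (hcard ▸ card_subgroup_dvd_card M)
  have h1 := card_lt_card_of_lt h.1
  have h2 := card_lt_card_of_lt h.2.1
  have h3 := card_lt_card_of_lt h.2.2
  rw [card_bot, ha] at h1
  have ha0 : a ≠ 0 := by rintro rfl; simp at h1
  rw [ha, hb, Nat.pow_lt_pow_iff_right hp.one_lt] at h2
  rw [hb, card_top, hcard, Nat.pow_lt_pow_iff_right hp.one_lt] at h3
  rw [ha, hb, show a = 1 by omega, show b = 2 by omega, pow_one]
  exact ⟨rfl, rfl⟩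

theorem card_center_of_card_eq_prime_cube (hcard : Nat.card P = p ^ 3)
    (hnonab : ∃ x y : P, x * y ≠ y * x) : Nat.card (center P) = p := by
  have hp : p.Prime := Fact.out
  have : Finite P := Nat.finite_of_card_ne_zero (hcard ▸ pow_ne_zero 3 hp.ne_zero)
  obtain ⟨k, hk0, hk⟩ := IsPGroup.card_center_eq_prime_pow hcard three_pos
  obtain ⟨j, -, hj⟩ := (Nat.dvd_prime_pow hp).mp (hcard ▸ (center P).index_dvd_card)
  have hkj : k + j = 3 := by
    have := (center P).card_mul_index
    rw [hk, hj, ← pow_add, hcard] at this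
    exact Nat.pow_right_injective hp.two_le this
  suffices 2 ≤ j by rw [hk, show k = 1 by omega, pow_one]
  by_contra! hj2
  obtain ⟨x, y, hxy⟩ := hnonab
  have : IsCyclic (P ⧸ center P) := isCyclic_of_card_dvd_prime (p := p) <| by
    rw [← index_eq_card, hj]
    exact (pow_dvd_pow p (show j ≤ 1 by omega)).trans (pow_one p).dvd
  exact hxy ((MonoidHom.isMulCommutative_of_isCyclic_of_ker_le_center (QuotientGroup.mk' _)
    (QuotientGroup.ker_mk' _).le).is_comm.comm x y)

theorem commutatorElement_mem_center_of_card_eq_prime_cube (hcard : Nat.card P = p ^ 3)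
    (hnonab : ∃ x y : P, x * y ≠ y * x) (g h : P) : ⁅g, h⁆ ∈ center P := by
  have hp : p.Prime := Fact.out
  have hquot : Nat.card (P ⧸ center P) = p ^ 2 := by
    have := (center P).card_mul_index
    rw [card_center_of_card_eq_prime_cube hcard hnonab, hcard, index_eq_card] at this
    exact Nat.eq_of_mul_eq_mul_left hp.pos (this.trans (by ring))
  have := IsPGroup.isMulCommutative_of_card_eq_prime_sq hquot
  rw [← QuotientGroup.eq_one_iff, ← QuotientGroup.mk'_apply, map_commutatorElement,
    commutatorElement_eq_one_iff_commute]
  exact this.is_comm.comm _ _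

end PrimeCube

theorem stmt_11_general {P : Type*} [Group P] [Finite P] (p : ℕ) (hp : p.Prime)
    (hcard : Nat.card P = p ^ 3) (hnonab : ∃ x y : P, x * y ≠ y * x)
    (α : MulAut P) (U M : Subgroup P)
    (hU : U ≠ Subgroup.center P)
    (hchain : ⊥ < U ∧ U < M ∧ M < ⊤)
    (n m k : ℤ)
    (hn : ∀ x : P, α x * (x ^ n)⁻¹ ∈ M)
    (hm : ∀ y ∈ M, α y * (y ^ m)⁻¹ ∈ U)
    (hk : ∀ z ∈ U, α z = z ^ k) :
    m ≡ n * k [ZMOD (p : ℤ)] := by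
  have : Fact p.Prime := ⟨hp⟩
  obtain ⟨hUcard, hMcard⟩ := card_eq_of_bot_lt_lt_lt_top hcard hchain
  have hZcard := card_center_of_card_eq_prime_cube hcard hnonab
  have hcentral := commutatorElement_mem_center_of_card_eq_prime_cube hcard hnonab
  have hUZ : U ⊓ center P = ⊥ := inf_eq_bot_of_card_eq_prime hUcard hZcard hU
  have := IsPGroup.isMulCommutative_of_card_eq_prime_sq hMcard
  have hMnormal : M.Normal := normal_of_card_eq_prime_pow_pred hcard hMcard
  obtain ⟨u, huU, hu1⟩ := SetLike.exists_of_lt hchain.1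
  have huM : u ∈ M := hchain.2.1.le huU
  have huZ : u ∉ center P := fun h => hu1 (hUZ ▸ mem_inf.mpr ⟨huU, h⟩)
  obtain ⟨x, hxu⟩ : ∃ x, ⁅x, u⁆ ≠ 1 := by
    by_contra! h
    exact huZ (mem_center_iff.mpr fun g => commutatorElement_eq_one_iff_mul_comm.mp (h g))
  set c := ⁅x, u⁆ with hc
  have hcM : c ∈ M := by
    rw [hc, commutatorElement_def]
    exact mul_mem (hMnormal.conj_mem u huM x) (inv_mem huM)
  have hαc : α c = c ^ (n * k) :=
    map_commutatorElement_eq_zpow_of_mem hcentral α.toMonoidHom (hn x) huM (hk u huU)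
  have hcpow : c ^ (n * k - m) = 1 := by
    have hmem : α c * (c ^ m)⁻¹ ∈ U ⊓ center P := by
      refine mem_inf.mpr ⟨hm c hcM, ?_⟩
      rw [hαc]
      exact mul_mem (zpow_mem (hcentral x u) _) (inv_mem (zpow_mem (hcentral x u) _))
    rwa [hUZ, mem_bot, hαc, ← zpow_sub] at hmem
  have horder : orderOf c = p := orderOf_eq_prime_of_mem hZcard (hcentral x u) hxu
  exact Int.modEq_iff_dvd.mpr (horder ▸ orderOf_dvd_iff_zpow_eq_one.mpr hcpow)

theorem stmt_11 {P : Type*} [Group P] [Finite P] (p : ℕ) (hp : p.Prime)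
    (hcard : Nat.card P = p ^ 3) (hnonab : ∃ x y : P, x * y ≠ y * x)
    (α : MulAut P) (U M : Subgroup P)
    (hU : U ≠ Subgroup.center P)
    (hchain : ⊥ < U ∧ U < M ∧ M < ⊤)
    (hUinv : U.map α.toMonoidHom = U) (hMinv : M.map α.toMonoidHom = M)
    (n m k : ℤ)
    (hn : ∀ x : P, α x * (x ^ n)⁻¹ ∈ M)
    (hm : ∀ y ∈ M, α y * (y ^ m)⁻¹ ∈ U)
    (hk : ∀ z ∈ U, α z = z ^ k) :
    m ≡ n * k [ZMOD (p : ℤ)] :=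
  stmt_11_general p hp hcard hnonab α U M hU hchain n m k hn hm hk
end

section
/- Let p be an odd prime, P a finite p-group, and A a subgroup of Aut(P). Let Ω(P) denote the subgroup of P generated by the elements of order dividing p, and suppose A stabilizes a subgroup series 1 = S_0 ≤ S_1 ≤ ... ≤ S_{n−1} ≤ S_n = Ω(P) (each S_i is A-invariant). If B is a subgroup of A such that [S_{i+1}, B] ≤ S_i for i = 0, 1, ..., n−1 (i.e. β(x)·x^{−1} ∈ S_i for all x ∈ S_{i+1} and all β ∈ B), then B is contained in a normal p-subgroup of A (i.e. B ≤ O_p(A)). -/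
/-!
Let `γ` be an automorphism in the stabilizer of the series whose order is prime to `p`. If
`γ x = c x` with `γ c = c` and `c` a `p`-element, then `γ ^ k x = c ^ k x` forces `c = 1`;
by induction along the series, `γ` therefore fixes `S n ⊇ Ω(P)` pointwise.

It remains to show that for odd `p` a `p'`-automorphism `γ` fixing every element of order `p`
is trivial. By maximality there is a characteristic subgroup `C` with `[C, P] ≤ Z(C)` and
`C_P(C) ≤ C` (a critical subgroup in Thompson's sense, without the Frattini condition). As `C`
has class at most two, `(c x) ^ p = [x, c] ^ (p(p-1)/2) c ^ p x ^ p` for `x, c ∈ C`, and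
induction on the order of `x` shows that `γ` fixes `C`. Then `γ x * x⁻¹` centralizes `C`,
so lies in `C` and is fixed by `γ`, whence `γ x = x`.

So the stabilizer of the series in `A`, a normal subgroup of `A` containing `B`, is a `p`-group.
-/

open Subgroup
open scoped commutatorElement

section ClassTwo

variable {G : Type*} [Group G] {a b : G}

theorem commutatorElement_pow_right (h : Commute ⁅a, b⁆ b) (n : ℕ) :
    ⁅a, b⁆ ^ n = ⁅a, b ^ n⁆ := by
  induction n with
  | zero => simp
  | succ n ih =>
    calc ⁅a, b⁆ ^ (n + 1) = a * b ^ n * a⁻¹ * ((b ^ n)⁻¹ * ⁅a, b⁆) := by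
          rw [pow_succ, ih, commutatorElement_def]; group
      _ = a * b ^ n * a⁻¹ * (⁅a, b⁆ * (b ^ n)⁻¹) := by rw [((h.pow_right n).inv_right).eq]
      _ = ⁅a, b ^ (n + 1)⁆ := by simp only [commutatorElement_def]; group

theorem mul_pow_eq_commutatorElement_pow (ha : Commute ⁅b, a⁆ a) (hb : Commute ⁅b, a⁆ b)
    (n : ℕ) : (a * b) ^ n = ⁅b, a⁆ ^ n.choose 2 * a ^ n * b ^ n := by
  have hswap : ∀ m : ℕ, b ^ m * a = ⁅b, a⁆ ^ m * a * b ^ m := by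
    intro m
    induction m with
    | zero => simp
    | succ m ih =>
      calc b ^ (m + 1) * a = b ^ m * (⁅b, a⁆ * a * b) := by
            rw [pow_succ, commutatorElement_def]; group
        _ = ⁅b, a⁆ * (b ^ m * a) * b := by
            rw [← mul_assoc, ← mul_assoc, ← (hb.pow_right m).eq]; group
        _ = ⁅b, a⁆ ^ (m + 1) * a * b ^ (m + 1) := by rw [ih]; group
  induction n with
  | zero => simp
  | succ n ih =>
    calc (a * b) ^ (n + 1) = ⁅b, a⁆ ^ n.choose 2 * a ^ n * (b ^ n * a) * b := by
          rw [pow_succ, ih]; group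
      _ = ⁅b, a⁆ ^ n.choose 2 * (a ^ n * ⁅b, a⁆ ^ n) * a * b ^ n * b := by
          rw [hswap]; group
      _ = ⁅b, a⁆ ^ (n + 1).choose 2 * a ^ (n + 1) * b ^ (n + 1) := by
          rw [← ((ha.pow_pow n n).eq), Nat.choose_succ_succ', Nat.choose_one_right]; group

end ClassTwo

namespace MulAut

variable {G : Type*} [Group G] {p : ℕ} {γ : MulAut G}

theorem apply_eq_self_of_coprime (hγ : (orderOf γ).Coprime p) {x : G}
    (hfix : γ (γ x * x⁻¹) = γ x * x⁻¹) (hpow : ∃ k, (γ x * x⁻¹) ^ p ^ k = 1) : γ x = x := by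
  set c := γ x * x⁻¹
  have hγx : γ x = c * x := by simp [c]
  have hiter : ∀ m : ℕ, (γ ^ m) x = c ^ m * x := by
    intro m
    induction m with
    | zero => simp
    | succ m ih =>
      rw [pow_succ', mul_apply, ih, map_mul, map_pow, hfix, hγx, ← mul_assoc, ← pow_succ]
  have hc : c ^ orderOf γ = 1 := by
    simpa [pow_orderOf_eq_one] using (hiter (orderOf γ)).symm
  obtain ⟨k, hk⟩ := hpow
  have hc1 : c = 1 := orderOf_eq_one_iff.mp <| Nat.eq_one_of_dvd_coprimes (hγ.pow_right k)
    (orderOf_dvd_of_pow_eq_one hc) (orderOf_dvd_of_pow_eq_one hk)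
  rw [hγx, hc1, one_mul]

theorem apply_eq_self_of_stabilizes (hG : IsPGroup p G) (hγ : (orderOf γ).Coprime p)
    {n : ℕ} {S : ℕ → Subgroup G} (hS0 : S 0 = ⊥)
    (hstab : ∀ i < n, ∀ x ∈ S (i + 1), γ x * x⁻¹ ∈ S i) : ∀ x ∈ S n, γ x = x := by
  suffices ∀ i ≤ n, ∀ x ∈ S i, γ x = x from this n le_rfl
  intro i
  induction i with
  | zero =>
    intro _ x hx
    rw [hS0, mem_bot] at hx
    rw [hx, map_one]
  | succ i ih =>
    intro hi x hx
    exact apply_eq_self_of_coprime hγ (ih (by omega) _ (hstab i hi x hx)) (hG _)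

theorem apply_eq_self_of_commutator_le_centralizer (hp : p.Prime) (hodd : Odd p)
    (hG : IsPGroup p G) (hγ : (orderOf γ).Coprime p) {C : Subgroup G}
    (hC : ⁅C, C⁆ ≤ centralizer C) (hγC : ∀ x ∈ C, γ x ∈ C)
    (hfix : ∀ x ∈ C, x ^ p = 1 → γ x = x) : ∀ x ∈ C, γ x = x := by
  have hp_dvd : p ∣ p.choose 2 := hp.dvd_choose_self two_ne_zero
    (hp.two_le.lt_of_ne' (by rintro rfl; exact absurd hodd (by decide)))
  intro x hx
  obtain ⟨k, hk⟩ := hG x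
  induction k generalizing x with
  | zero => rw [pow_zero, pow_one] at hk; rw [hk, map_one]
  | succ k ih =>
    have hxp : γ (x ^ p) = x ^ p :=
      ih _ (C.pow_mem hx p) (by rwa [← pow_mul, ← pow_succ'])
    set c := γ x * x⁻¹
    have hc : c ∈ C := C.mul_mem (hγC x hx) (C.inv_mem hx)
    have hu : ⁅x, c⁆ ∈ centralizer C := hC (commutator_mem_commutator hx hc)
    have hrel : ⁅x, c⁆ ^ p.choose 2 * c ^ p = 1 := by
      have h := mul_pow_eq_commutatorElement_pow (mem_centralizer_iff.mp hu c hc).symm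
        (mem_centralizer_iff.mp hu x hx).symm p
      rwa [show c * x = γ x by simp [c], ← map_pow, hxp, eq_comm, mul_eq_right] at h
    have hcp : c ^ p ∈ centralizer C := by
      rw [eq_inv_of_mul_eq_one_right hrel]
      exact inv_mem (pow_mem hu _)
    have hup : ⁅x, c⁆ ^ p = 1 := by
      rw [commutatorElement_pow_right (mem_centralizer_iff.mp hu c hc).symm,
        commutatorElement_eq_one_iff_mul_comm]
      exact mem_centralizer_iff.mp hcp x hx
    obtain ⟨m, hm⟩ := hp_dvd
    rw [hm, pow_mul, hup, one_pow, one_mul] at hrel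
    exact apply_eq_self_of_coprime hγ (hfix c hc hrel) ⟨1, by rwa [pow_one]⟩

theorem mul_inv_mem_centralizer {K : Subgroup G} [hK : K.Normal] (hfix : ∀ c ∈ K, γ c = c)
    (x : G) : γ x * x⁻¹ ∈ centralizer K := by
  rw [mem_centralizer_iff]
  intro c hc
  have hconj : γ (x⁻¹ * c * x) = x⁻¹ * c * x := hfix _ (by simpa using hK.conj_mem c hc x⁻¹)
  rw [map_mul, map_mul, map_inv, hfix c hc] at hconj
  calc c * (γ x * x⁻¹) = γ x * ((γ x)⁻¹ * c * γ x) * x⁻¹ := by group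
    _ = γ x * x⁻¹ * c := by rw [hconj]; group

end MulAut

namespace IsPGroup

variable {G : Type*} [Group G] [Finite G] {p : ℕ}

theorem of_forall_coprime_orderOf (hp : p.Prime) (h : ∀ g : G, (orderOf g).Coprime p → g = 1) :
    IsPGroup p G := by
  intro g
  refine ⟨(orderOf g).factorization p, h _ ?_⟩
  rw [orderOf_pow' g (pow_ne_zero _ hp.ne_zero), Nat.gcd_eq_right (Nat.ordProj_dvd _ _)]
  exact (Nat.coprime_ordCompl hp (orderOf_pos g).ne').symm

theorem exists_ne_one_mem_center_of_normal [Fact p.Prime] (hG : IsPGroup p G)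
    {N : Subgroup G} [N.Normal] (hN : N ≠ ⊥) : ∃ g ∈ N, g ∈ center G ∧ g ≠ 1 := by
  have hNp : p ∣ Nat.card N := by
    have : Nontrivial N := N.nontrivial_iff_ne_bot.mpr hN
    obtain ⟨k, hk, hcard⟩ := (hG.to_subgroup N).nontrivial_iff_card.mp this
    exact hcard ▸ dvd_pow_self p hk.ne'
  have hfix1 : (1 : N) ∈ MulAction.fixedPoints (ConjAct G) N := fun g => smul_one g
  obtain ⟨b, hb, hb1⟩ := (hG.of_equiv ConjAct.toConjAct)
    |>.exists_fixed_point_of_prime_dvd_card_of_fixed_point N hNp hfix1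
  refine ⟨b, b.2, mem_center_iff.mpr fun g => ?_, fun h => hb1 (Subtype.ext h.symm)⟩
  have hconj := congrArg Subtype.val (hb (ConjAct.toConjAct g))
  rw [ConjAct.Subgroup.val_conj_smul, ConjAct.toConjAct_smul] at hconj
  calc g * b = g * b * g⁻¹ * g := by group
    _ = b * g := by rw [hconj]

theorem exists_characteristic_gt [Fact p.Prime] (hG : IsPGroup p G) {C : Subgroup G}
    [C.Characteristic] (hC : ⁅C, ⊤⁆ ≤ centralizer (C : Set G))
    (hCC : ¬centralizer (C : Set G) ≤ C) :
    ∃ E : Subgroup G, C < E ∧ E.Characteristic ∧ ⁅E, ⊤⁆ ≤ centralizer (E : Set G) := by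
  set Z := C ⊓ centralizer C
  set D := centralizer C ⊓ Z.upperCentralSeriesStep
  refine ⟨C ⊔ D, ?_, inferInstance, ?_⟩
  · have hmap : (centralizer C).map (QuotientGroup.mk' Z) ≠ ⊥ := by
      rw [Ne, Subgroup.map_eq_bot_iff, QuotientGroup.ker_mk']
      exact fun h => hCC (h.trans inf_le_left)
    have : ((centralizer C).map (QuotientGroup.mk' Z)).Normal :=
      Normal.map inferInstance _ (QuotientGroup.mk'_surjective Z)
    obtain ⟨-, ⟨h, hh, rfl⟩, hcenter, hne⟩ :=
      (hG.to_quotient Z).exists_ne_one_mem_center_of_normal hmap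
    have hhD : h ∈ D :=
      ⟨hh, by rw [Subgroup.upperCentralSeriesStep_eq_comap_center]; exact hcenter⟩
    have hhC : h ∉ C := fun hC' => hne ((QuotientGroup.eq_one_iff h).mpr ⟨hC', hh⟩)
    exact SetLike.lt_iff_le_and_exists.mpr ⟨le_sup_left, h, mem_sup_right hhD, hhC⟩
  · have hCZ : ⁅C, ⊤⁆ ≤ Z := le_inf (commutator_le_left C ⊤) hC
    have hstep : C ⊔ D ≤ Z.upperCentralSeriesStep :=
      sup_le (fun c hc y => hCZ (commutator_mem_commutator hc (mem_top y))) inf_le_right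
    have hZ : Z ≤ centralizer (C ⊔ D : Subgroup G) := by
      rw [le_centralizer_iff]
      exact sup_le (le_centralizer_iff.mp inf_le_right)
        (inf_le_left.trans (centralizer_le inf_le_left))
    exact (commutator_le.mpr fun g hg y _ => hstep hg y).trans hZ

theorem exists_characteristic_centralizer_le [Fact p.Prime] (hG : IsPGroup p G) :
    ∃ C : Subgroup G, C.Characteristic ∧ ⁅C, ⊤⁆ ≤ centralizer (C : Set G) ∧
      centralizer (C : Set G) ≤ C := by
  obtain ⟨C, ⟨hchar, hC⟩, hmax⟩ :=
    (Set.toFinite {C : Subgroup G | C.Characteristic ∧ ⁅C, ⊤⁆ ≤ centralizer (C : Set G)})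
      |>.exists_maximal ⟨⊥, inferInstance, by rw [commutator_bot_left]; exact bot_le⟩
  refine ⟨C, hchar, hC, not_not.mp fun hCC => ?_⟩
  obtain ⟨E, hlt, hE⟩ := hG.exists_characteristic_gt hC hCC
  exact hlt.not_ge (hmax hE hlt.le)

theorem mulAut_eq_one_of_fixes_pow_prime (hp : p.Prime) (hodd : Odd p) (hG : IsPGroup p G)
    {γ : MulAut G} (hγ : (orderOf γ).Coprime p) (hfix : ∀ x : G, x ^ p = 1 → γ x = x) :
    γ = 1 := by
  have : Fact p.Prime := ⟨hp⟩
  obtain ⟨C, hchar, hC, hCC⟩ := hG.exists_characteristic_centralizer_le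
  have hfixC : ∀ x ∈ C, γ x = x :=
    MulAut.apply_eq_self_of_commutator_le_centralizer hp hodd hG hγ
      ((commutator_mono le_rfl le_top).trans hC)
      (fun x hx => characteristic_iff_le_comap.mp hchar γ hx) (fun x _ => hfix x)
  ext x
  exact MulAut.apply_eq_self_of_coprime hγ
    (hfixC _ (hCC (MulAut.mul_inv_mem_centralizer hfixC x))) (hG _)

end IsPGroup

section SeriesStabilizer

variable {P : Type*} [Group P]

def seriesStabilizer (S : ℕ → Subgroup P) (n : ℕ) : Subgroup (MulAut P) where
  carrier := {α | (∀ i ≤ n, ∀ x, α x ∈ S i ↔ x ∈ S i) ∧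
    ∀ i < n, ∀ x ∈ S (i + 1), α x * x⁻¹ ∈ S i}
  one_mem' := ⟨fun _ _ _ => Iff.rfl, fun i _ x _ => by simp⟩
  mul_mem' := by
    rintro α β ⟨hαS, hα⟩ ⟨hβS, hβ⟩
    refine ⟨fun i hi x => (hαS i hi _).trans (hβS i hi x), fun i hi x hx => ?_⟩
    have hβx : β x ∈ S (i + 1) := (hβS (i + 1) hi x).mpr hx
    rw [show (α * β) x * x⁻¹ = (α (β x) * (β x)⁻¹) * (β x * x⁻¹) by simp]
    exact mul_mem (hα i hi _ hβx) (hβ i hi x hx)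
  inv_mem' := by
    rintro α ⟨hαS, hα⟩
    refine ⟨fun i hi x => by simpa using (hαS i hi (α⁻¹ x)).symm, fun i hi x hx => ?_⟩
    have hy : α⁻¹ x ∈ S (i + 1) := (hαS (i + 1) hi (α⁻¹ x)).mp (by simpa using hx)
    simpa using inv_mem (hα i hi _ hy)

theorem conj_mem_seriesStabilizer {S : ℕ → Subgroup P} {n : ℕ} {g α : MulAut P}
    (hg : ∀ i ≤ n, ∀ x, g x ∈ S i ↔ x ∈ S i) (hα : α ∈ seriesStabilizer S n) :
    g * α * g⁻¹ ∈ seriesStabilizer S n := by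
  obtain ⟨hαS, hα⟩ := hα
  have hg' : ∀ i ≤ n, ∀ x, g⁻¹ x ∈ S i ↔ x ∈ S i := fun i hi x => by
    simpa using (hg i hi (g⁻¹ x)).symm
  refine ⟨fun i hi x => ?_, fun i hi x hx => ?_⟩
  · exact (hg i hi _).trans ((hαS i hi _).trans (hg' i hi x))
  · simpa using (hg i hi.le _).mpr (hα i hi _ ((hg' (i + 1) hi x).mpr hx))

theorem isPGroup_seriesStabilizer [Finite P] {p : ℕ} (hp : p.Prime) (hodd : Odd p)
    (hP : IsPGroup p P) {S : ℕ → Subgroup P} {n : ℕ} (hS0 : S 0 = ⊥)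
    (hSn : ∀ x : P, x ^ p = 1 → x ∈ S n) : IsPGroup p (seriesStabilizer S n) :=
  IsPGroup.of_forall_coprime_orderOf hp fun γ hγ => by
    rw [← Subgroup.orderOf_coe] at hγ
    exact Subtype.ext <| hP.mulAut_eq_one_of_fixes_pow_prime hp hodd hγ fun x hx =>
      MulAut.apply_eq_self_of_stabilizes hP hγ hS0 γ.2.2 x (hSn x hx)

end SeriesStabilizer

theorem stmt_12_general {P : Type*} [Group P] [Finite P] (p : ℕ) (hp : p.Prime)
    (hodd : Odd p) (hpgrp : IsPGroup p P)
    (A : Subgroup (MulAut P)) (n : ℕ) (S : ℕ → Subgroup P)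
    (hS0 : S 0 = ⊥) (hSn : S n = Subgroup.closure {x : P | x ^ p = 1})
    (hinv : ∀ i ≤ n, ∀ α ∈ A, (S i).map (α : MulAut P).toMonoidHom = S i)
    (B : Subgroup (MulAut P)) (hBA : B ≤ A)
    (hB : ∀ i < n, ∀ β ∈ B, ∀ x ∈ S (i + 1), (β : MulAut P) x * x⁻¹ ∈ S i) :
    ∃ N : Subgroup A, N.Normal ∧ IsPGroup p N ∧ B.subgroupOf A ≤ N := by
  have hAS : ∀ α ∈ A, ∀ i ≤ n, ∀ x, α x ∈ S i ↔ x ∈ S i := fun α hα i hi x =>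
    (SetLike.ext_iff.mp (hinv i hi α hα) (α x)).symm.trans (by
      rw [mem_map_equiv, MulEquiv.symm_apply_apply])
  refine ⟨(seriesStabilizer S n).subgroupOf A, ⟨fun α hα g => ?_⟩, ?_, ?_⟩
  · exact conj_mem_seriesStabilizer (hAS g g.2) hα
  · exact (isPGroup_seriesStabilizer hp hodd hpgrp hS0 fun x hx => hSn ▸ subset_closure hx
      ).comap_of_injective _ A.subtype_injective
  · exact fun β hβ => ⟨hAS β (hBA hβ), fun i hi => hB i hi β hβ⟩

theorem stmt_12 {P : Type*} [Group P] [Finite P] (p : ℕ) (hp : p.Prime)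
    (hodd : Odd p) (hpgrp : IsPGroup p P)
    (A : Subgroup (MulAut P)) (n : ℕ) (S : ℕ → Subgroup P)
    (hS0 : S 0 = ⊥) (hSn : S n = Subgroup.closure {x : P | x ^ p = 1})
    (hmono : ∀ i < n, S i ≤ S (i + 1))
    (hinv : ∀ i ≤ n, ∀ α ∈ A, (S i).map (α : MulAut P).toMonoidHom = S i)
    (B : Subgroup (MulAut P)) (hBA : B ≤ A)
    (hB : ∀ i < n, ∀ β ∈ B, ∀ x ∈ S (i + 1), (β : MulAut P) x * x⁻¹ ∈ S i) :
    ∃ N : Subgroup A, N.Normal ∧ IsPGroup p N ∧ B.subgroupOf A ≤ N :=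
  stmt_12_general p hp hodd hpgrp A n S hS0 hSn hinv B hBA hB
end

section
/- Let p be an odd prime and P a finite nonabelian metacyclic p-group whose commutator subgroup [P,P] has order p. Then the subgroup Ω(P) generated by the elements of order dividing p is isomorphic to C_p × C_p. -/
/-!
Since `P'` is a normal subgroup of order `p` of a `p`-group, it is central, so
`(ab)^p = a^p b^p [b⁻¹, a⁻¹]^(p choose 2)`, and for odd `p` the last factor vanishes. Hence
`x ↦ x^p` is a homomorphism and `Ω(P)` is its kernel, a subgroup of exponent `p`. Its
intersection with the cyclic `N` and its image in the cyclic `P/N` have order at most `p`, so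
`|Ω(P)|` divides `p²`. It contains `P' ≤ N`, and also an element outside `N`: pick `z` in `⟨y⟩`,
where `y` generates `P` modulo `N`, whose image in `P/N` has order `p`. If `z^p = m^p` with
`m ∈ N`, then `z m⁻¹` will do; otherwise `z^p` generates `N` and `P = ⟨y⟩` would be cyclic.
Thus `Ω(P)` is a group of order `p²` and exponent `p`, i.e. `C_p × C_p`.
-/

open Subgroup
open scoped commutatorElement

section
variable {G : Type*} [Group G]

theorem pow_mul_eq_of_mem_center {a b c : G} (hc : c ∈ center G)
    (h : b * a = a * b * c) (n : ℕ) : b ^ n * a = a * b ^ n * c ^ n := by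
  induction n with
  | zero => simp
  | succ n ih =>
    have hcb : c * b ^ n = b ^ n * c := (mem_center_iff.1 hc _).symm
    calc b ^ (n + 1) * a = b * (b ^ n * a) := by rw [pow_succ', mul_assoc]
      _ = a * b * (c * b ^ n) * c ^ n := by rw [ih, ← mul_assoc, ← mul_assoc, h]; group
      _ = a * b ^ (n + 1) * c ^ (n + 1) := by rw [hcb]; group

theorem mul_pow_eq_of_mem_center {a b c : G} (hc : c ∈ center G)
    (h : b * a = a * b * c) (n : ℕ) : (a * b) ^ n = a ^ n * b ^ n * c ^ n.choose 2 := by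
  induction n with
  | zero => simp
  | succ n ih =>
    have hcomm : ∀ (k : ℕ) (g : G), c ^ k * g = g * c ^ k := fun k g =>
      (Commute.pow_left (mem_center_iff.1 hc g).symm k).eq
    calc (a * b) ^ (n + 1) = a ^ n * b ^ n * (c ^ n.choose 2 * (a * b)) := by
          rw [pow_succ, ih]; group
      _ = a ^ n * (b ^ n * a) * b * c ^ n.choose 2 := by rw [hcomm]; group
      _ = a ^ (n + 1) * b ^ n * (c ^ n * b) * c ^ n.choose 2 := by
          rw [pow_mul_eq_of_mem_center hc h]; group
      _ = a ^ (n + 1) * b ^ (n + 1) * c ^ (n + 1).choose 2 := by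
          rw [hcomm, Nat.choose_succ_succ', Nat.choose_one_right, pow_add]; group

theorem Nat.dvd_choose_two_of_odd {n : ℕ} (hn : Odd n) : n ∣ n.choose 2 := by
  obtain ⟨k, rfl⟩ := hn
  refine ⟨k, ?_⟩
  rw [Nat.choose_two_right, show 2 * k + 1 - 1 = 2 * k by omega]
  rw [mul_left_comm, Nat.mul_div_cancel_left _ two_pos]

theorem mul_pow_of_commutator_le_center {n : ℕ} (hn : Odd n) (hcenter : commutator G ≤ center G)
    (hexp : ∀ c ∈ commutator G, c ^ n = 1) (a b : G) : (a * b) ^ n = a ^ n * b ^ n := by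
  have hc : ⁅b⁻¹, a⁻¹⁆ ∈ commutator G := commutator_mem_commutator (mem_top _) (mem_top _)
  have hba : b * a = a * b * ⁅b⁻¹, a⁻¹⁆ := by rw [commutatorElement_def]; group
  obtain ⟨k, hk⟩ := Nat.dvd_choose_two_of_odd hn
  rw [mul_pow_eq_of_mem_center (hcenter hc) hba, hk, pow_mul, hexp _ hc, one_pow, mul_one]

end

theorem IsPGroup.le_center_of_card_eq {G : Type*} [Group G] [Finite G] {p : ℕ} [Fact p.Prime]
    (hG : IsPGroup p G) (D : Subgroup G) [D.Normal] (hD : Nat.card D = p) : D ≤ center G := by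
  have hG' : IsPGroup p (ConjAct G) := hG.of_equiv ConjAct.toConjAct
  obtain ⟨b, hb, hb1⟩ := hG'.exists_fixed_point_of_prime_dvd_card_of_fixed_point D hD.symm.dvd
    (a := 1) fun _ => smul_one _
  have hbc : (b : G) ∈ center G := by
    refine mem_center_iff.2 fun g => ?_
    have := congrArg Subtype.val (hb (ConjAct.toConjAct g))
    rw [ConjAct.Subgroup.val_conj_smul, ConjAct.toConjAct_smul] at this
    exact mul_inv_eq_iff_eq_mul.1 this
  have hzp : zpowers (b : G) = D := by
    refine eq_of_le_of_card_ge (zpowers_le.2 b.2) ?_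
    rw [Nat.card_zpowers, hD, orderOf_submonoid,
      orderOf_eq_prime (hD ▸ pow_card_eq_one') (Ne.symm hb1)]
  exact hzp ▸ zpowers_le.2 hbc

theorem IsCyclic.card_dvd_of_forall_pow_eq_one {C : Type*} [Group C] [IsCyclic C] {n : ℕ}
    (h : ∀ x : C, x ^ n = 1) : Nat.card C ∣ n :=
  IsCyclic.exponent_eq_card (α := C) ▸ Monoid.exponent_dvd_of_forall_pow_eq_one h

theorem MonoidHom.card_dvd_sq_of_isCyclic_ker_range {K Q : Type*} [Group K] [Group Q] (f : K →* Q)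
    [IsCyclic f.ker] [IsCyclic f.range] {n : ℕ} (h : ∀ x : K, x ^ n = 1) : Nat.card K ∣ n ^ 2 := by
  rw [← f.ker.card_mul_index, Subgroup.index_ker, sq]
  refine mul_dvd_mul (IsCyclic.card_dvd_of_forall_pow_eq_one fun x => ?_)
    (IsCyclic.card_dvd_of_forall_pow_eq_one fun x => ?_)
  · exact Subtype.ext (by simp [h])
  · obtain ⟨_, y, rfl⟩ := x
    exact Subtype.ext (by simp [← map_pow, h])

theorem Subgroup.card_dvd_sq_of_forall_pow_eq_one {G : Type*} [Group G] (N : Subgroup G) [N.Normal]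
    [IsCyclic N] [IsCyclic (G ⧸ N)] (H : Subgroup G) {n : ℕ} (hH : ∀ x ∈ H, x ^ n = 1) :
    Nat.card H ∣ n ^ 2 := by
  let f : H →* G ⧸ N := (QuotientGroup.mk' N).comp H.subtype
  have hker : ∀ x : f.ker, (x : H).1 ∈ N := fun x => (QuotientGroup.eq_one_iff _).1 x.2
  have : IsCyclic f.ker := isCyclic_of_injective
    { toFun := fun x => (⟨_, hker x⟩ : N), map_one' := rfl, map_mul' := fun _ _ => rfl }
    fun x y hxy => Subtype.ext (Subtype.ext (congrArg Subtype.val hxy :))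
  exact f.card_dvd_sq_of_isCyclic_ker_range fun x => Subtype.ext (hH x x.2)

theorem IsPGroup.exists_pow_eq_or_zpowers_eq_top {C : Type*} [Group C] [Finite C] [IsCyclic C]
    {p : ℕ} [hp : Fact p.Prime] (hC : IsPGroup p C) (x : C) :
    (∃ m : C, m ^ p = x) ∨ zpowers x = ⊤ := by
  obtain ⟨g, hg⟩ := IsCyclic.exists_generator (α := C)
  obtain ⟨t, rfl⟩ := (mem_powers_iff_mem_zpowers).2 (hg x)
  by_cases hpt : p ∣ t
  · obtain ⟨u, rfl⟩ := hpt
    exact Or.inl ⟨g ^ u, by rw [← pow_mul, mul_comm]⟩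
  · obtain ⟨k, hk⟩ := IsPGroup.iff_card.1 hC
    have hord : orderOf g = Nat.card C := orderOf_eq_card_of_forall_mem_zpowers hg
    have hcop : (orderOf g).Coprime t := by
      rw [hord, hk]; exact ((Nat.Prime.coprime_iff_not_dvd hp.out).2 hpt).pow_left k
    refine Or.inr (eq_top_of_card_eq _ ?_)
    rw [Nat.card_zpowers, hcop.orderOf_pow, hord]

theorem Subgroup.zpowers_eq_top_of_zpowers_mk_eq_top {G : Type*} [Group G] {N : Subgroup G}
    [N.Normal] {y : G} (hy : zpowers (y : G ⧸ N) = ⊤) (hN : N ≤ zpowers y) : zpowers y = ⊤ := by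
  have hmap : (zpowers y).map (QuotientGroup.mk' N) = ⊤ := by rw [MonoidHom.map_zpowers]; exact hy
  have hker : (QuotientGroup.mk' N).ker ≤ zpowers y := by rwa [QuotientGroup.ker_mk']
  rw [← comap_map_eq_self hker, hmap, comap_top]

theorem IsPGroup.exists_pow_eq_one_notMem {G : Type*} [Group G] [Finite G] {p : ℕ} [Fact p.Prime]
    (hG : IsPGroup p G) (hG_nc : ¬ IsCyclic G) (N : Subgroup G) [N.Normal] [IsCyclic N]
    [IsCyclic (G ⧸ N)] (hpow : ∀ a b : G, (a * b) ^ p = a ^ p * b ^ p) :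
    ∃ w : G, w ^ p = 1 ∧ w ∉ N := by
  obtain ⟨g, hy⟩ := IsCyclic.exists_generator (α := G ⧸ N)
  obtain ⟨y, rfl⟩ := QuotientGroup.mk_surjective g
  have hNtop : N ≠ ⊤ := by
    rintro rfl
    exact hG_nc (isCyclic_of_surjective topEquiv.toMonoidHom topEquiv.surjective)
  obtain ⟨n, hn, hcard⟩ :=
    (hG.to_quotient N).nontrivial_iff_card.1 (QuotientGroup.nontrivial_iff.2 hNtop)
  obtain ⟨q, hq⟩ := exists_prime_orderOf_dvd_card' p (hcard ▸ dvd_pow_self p hn.ne')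
  obtain ⟨j, hj⟩ := mem_zpowers_iff.1 (hy q)
  set z := y ^ j
  have hzbar : ((z : G) : G ⧸ N) = q := by rw [QuotientGroup.mk_zpow, hj]
  have hzN : z ∉ N := fun h => (Fact.out : p.Prime).one_lt.ne' <| by
    rw [← hq, ← hzbar, (QuotientGroup.eq_one_iff z).2 h, orderOf_one]
  have hzpN : z ^ p ∈ N := by
    rw [← QuotientGroup.eq_one_iff, QuotientGroup.mk_pow, hzbar, ← hq, pow_orderOf_eq_one]
  rcases (hG.to_subgroup N).exists_pow_eq_or_zpowers_eq_top ⟨z ^ p, hzpN⟩ with ⟨m, hm⟩ | htop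
  · refine ⟨z * (m : G)⁻¹, ?_, fun hw => hzN ?_⟩
    · rw [hpow, inv_pow, ← SubgroupClass.coe_pow, hm, mul_inv_cancel]
    · simpa using N.mul_mem hw m.2
  · refine absurd (isCyclic_iff_exists_zpowers_eq_top.2 ⟨y, ?_⟩) hG_nc
    have hN : N ≤ zpowers y := calc
      N = (zpowers (⟨z ^ p, hzpN⟩ : N)).map N.subtype := by
          rw [htop, ← MonoidHom.range_eq_map, range_subtype]
      _ = zpowers (z ^ p) := MonoidHom.map_zpowers _ _
      _ ≤ zpowers y := zpowers_le.2 (pow_mem (zpow_mem (mem_zpowers y) j) p)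
    exact zpowers_eq_top_of_zpowers_mk_eq_top ((eq_top_iff' _).2 hy) hN

theorem ZMod.nonempty_linearEquiv_prod_of_card_eq_sq {V : Type*} [AddCommGroup V] {p : ℕ}
    [Fact p.Prime] [Module (ZMod p) V] (hcard : Nat.card V = p ^ 2) :
    Nonempty (V ≃ₗ[ZMod p] ZMod p × ZMod p) := by
  have : Finite V := Nat.finite_of_card_ne_zero (by simp [hcard, (Fact.out : p.Prime).ne_zero])
  have hrank : Module.finrank (ZMod p) V = Module.finrank (ZMod p) (ZMod p × ZMod p) := by
    rw [Module.finrank_prod, Module.finrank_self]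
    refine Nat.pow_right_injective (Fact.out : p.Prime).two_le (?_ : p ^ _ = p ^ 2)
    rw [← hcard, Module.natCard_eq_pow_finrank (K := ZMod p), Nat.card_zmod]
  exact ⟨LinearEquiv.ofFinrankEq V _ hrank⟩

theorem nonempty_mulEquiv_zmod_prod_of_card_eq_prime_sq {K : Type*} [Group K] {p : ℕ} [Fact p.Prime]
    (hcard : Nat.card K = p ^ 2) (hexp : ∀ x : K, x ^ p = 1) :
    Nonempty (K ≃* Multiplicative (ZMod p) × Multiplicative (ZMod p)) := by
  let := IsPGroup.commGroupOfCardEqPrimeSq hcard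
  let _ : Module (ZMod p) (Additive K) := AddCommGroup.zmodModule fun x => hexp x.toMul
  obtain ⟨e⟩ := ZMod.nonempty_linearEquiv_prod_of_card_eq_sq (V := Additive K) hcard
  exact ⟨(AddEquiv.toMultiplicativeRight e.toAddEquiv).trans (MulEquiv.prodMultiplicative _ _)⟩

theorem Nat.eq_sq_of_dvd_sq_of_lt {p m : ℕ} (hp : p.Prime) (hdvd : m ∣ p ^ 2) (hlt : p < m) :
    m = p ^ 2 := by
  obtain ⟨i, hi, rfl⟩ := (Nat.dvd_prime_pow hp).1 hdvd
  have : 1 < i := (Nat.pow_lt_pow_iff_right hp.one_lt).1 (by rwa [pow_one])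
  rw [show i = 2 by omega]

theorem stmt_13 {P : Type*} [Group P] [Finite P] (p : ℕ) (hp : p.Prime)
    (hodd : Odd p) (hpgrp : IsPGroup p P)
    (hmeta : ∃ (N : Subgroup P) (_ : N.Normal), IsCyclic N ∧ IsCyclic (P ⧸ N))
    (hnonab : ∃ x y : P, x * y ≠ y * x)
    (hcomm : Nat.card (commutator P) = p) :
    Nonempty ((Subgroup.closure {x : P | x ^ p = 1}) ≃*
      Multiplicative (ZMod p) × Multiplicative (ZMod p)) := by
  obtain ⟨N, hN, hNcyc, hQcyc⟩ := hmeta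
  have : Fact p.Prime := ⟨hp⟩
  have hnc : ¬ IsCyclic P := fun h => by
    obtain ⟨x, y, hxy⟩ := hnonab
    exact hxy (h.commGroup.mul_comm x y)
  have hexp : ∀ c ∈ commutator P, c ^ p = 1 := fun c hc =>
    orderOf_dvd_iff_pow_eq_one.1 (hcomm ▸ (commutator P).orderOf_dvd_natCard hc)
  have hpow := mul_pow_of_commutator_le_center hodd
    (hpgrp.le_center_of_card_eq (commutator P) hcomm) hexp
  let φ : P →* P := MonoidHom.mk' (· ^ p) hpow
  rw [show closure {x : P | x ^ p = 1} = φ.ker from closure_eq φ.ker]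
  have hDN : commutator P ≤ N := by
    let := IsCyclic.commGroup (α := P ⧸ N)
    simpa using Abelianization.commutator_subset_ker (QuotientGroup.mk' N)
  obtain ⟨w, hw, hwN⟩ := hpgrp.exists_pow_eq_one_notMem hnc N hpow
  have hlt : p < Nat.card φ.ker := hcomm ▸ lt_of_not_ge fun hle =>
    hwN (hDN (eq_of_le_of_card_ge hexp hle ▸ hw))
  have hcard := Nat.eq_sq_of_dvd_sq_of_lt hp
    (N.card_dvd_sq_of_forall_pow_eq_one φ.ker fun _ => id) hlt
  exact nonempty_mulEquiv_zmod_prod_of_card_eq_prime_sq hcard fun x => Subtype.ext x.2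
end

section
/- Let p be an odd prime, M a finite elementary abelian p-group, and H a subgroup of Aut(M) generated by two subgroups D and E, each of order p, such that D fixes pointwise a subgroup of index p of M and E fixes pointwise a subgroup of index p of M. If H is not a p-group, then the fixed-point subgroup C_M(H) = {x ∈ M : α(x) = x for all α ∈ H} has index exactly p^2 in M. -/
/-!
Let `N₁, N₂` be the index-`p` subgroups fixed by `D` and `E`. An automorphism of order `p`
preserving `N₁` acts on the cyclic group `M ⧸ N₁` of order `p` as some `x ↦ x ^ m`; its `p`-th
power `x ↦ x ^ (m ^ p)` is trivial, and `m ^ p ≡ m (mod p)` by Fermat, so it acts trivially: `D`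
and `E` consist of transvections. If `N₁ = N₂`, then `H` lies in the group of transvections with
axis `N₁`, which has exponent `p`, so `H` would be a `p`-group. Hence `N₁ ≠ N₂`, and
`C_M(H) = C_M(D) ⊓ C_M(E) = N₁ ⊓ N₂` has index `p ^ 2`.
-/

/-- The subgroup of points of `M` fixed by every automorphism in `H`. -/
def fixedSubgroup {M : Type*} [Group M] (H : Subgroup (MulAut M)) : Subgroup M where
  carrier := {x | ∀ α ∈ H, α x = x}
  one_mem' := fun α _ => map_one α
  mul_mem' := fun {a b} ha hb α hα => by rw [map_mul, ha α hα, hb α hα]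
  inv_mem' := fun {a} ha α hα => by rw [map_inv, ha α hα]

namespace Subgroup

variable {G : Type*} [Group G]

theorem eq_or_eq_top_of_le_of_index_prime {N K : Subgroup G} (hN : N.index.Prime)
    (hNK : N ≤ K) : K = N ∨ K = ⊤ := by
  rw [← relIndex_mul_index hNK] at hN
  rcases Nat.prime_mul_iff.mp hN with ⟨_, hK⟩ | ⟨_, hrel⟩
  · exact Or.inr (index_eq_one.mp hK)
  · exact Or.inl (le_antisymm (relIndex_eq_one.mp hrel) hNK)

theorem index_inf_eq_sq_of_ne {A B : Subgroup G} [B.Normal] {p : ℕ} (hp : p.Prime)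
    (hA : A.index = p) (hB : B.index = p) (hne : A ≠ B) : (A ⊓ B).index = p ^ 2 := by
  have hsup : A ⊔ B = ⊤ := by
    refine (eq_or_eq_top_of_le_of_index_prime (hA ▸ hp) le_sup_left).resolve_left fun h => ?_
    rcases eq_or_eq_top_of_le_of_index_prime (hB ▸ hp) (sup_eq_left.mp h) with h' | h'
    · exact hne h'
    · exact hp.one_lt.ne' (by rw [← hA, h', index_top])
  rw [← relIndex_mul_index (inf_le_left : A ⊓ B ≤ A), inf_relIndex_left, ← relIndex_sup_right,
    hsup, relIndex_top_right, hA, hB, sq]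

end Subgroup

theorem MonoidHom.apply_eq_self_of_iterate_prime_card {G : Type*} [Group G] {p : ℕ}
    [hp : Fact p.Prime] (hG : Nat.card G = p) (f : G →* G) (hf : ∀ g, f^[p] g = g) (g : G) :
    f g = g := by
  have : IsCyclic G := isCyclic_of_prime_card hG
  obtain ⟨m, hm⟩ := f.map_cyclic
  have iterate_eq : ∀ j : ℕ, f^[j] g = g ^ (m ^ j) := by
    intro j
    induction j with
    | zero => simp
    | succ j ih => rw [Function.iterate_succ_apply', ih, hm, ← zpow_mul, pow_succ]
  have horder : (orderOf g : ℤ) ∣ p :=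
    Int.natCast_dvd_natCast.mpr (hG ▸ orderOf_dvd_natCard g)
  calc f g = g ^ m := hm g
    _ = g ^ (m ^ p) :=
      zpow_eq_zpow_iff_modEq.mpr ((Int.ModEq.pow_prime_eq_self hp.out m).of_dvd horder).symm
    _ = g := by rw [← iterate_eq, hf]

theorem MulAut.mk_apply_eq_of_pow_eq_one {M : Type*} [Group M] {N : Subgroup M} [N.Normal]
    {p : ℕ} [Fact p.Prime] (hN : N.index = p) {σ : MulAut M} (hσN : ∀ x ∈ N, σ x ∈ N)
    (hσ : σ ^ p = 1) (x : M) : (σ x : M ⧸ N) = x := by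
  let f : M ⧸ N →* M ⧸ N := QuotientGroup.map N N σ.toMonoidHom hσN
  have iterate_mk : ∀ j : ℕ, ∀ y : M, f^[j] y = ((σ ^ j) y : M) := by
    intro j
    induction j with
    | zero => simp
    | succ j ih => intro y; rw [Function.iterate_succ_apply', ih, pow_succ']; rfl
  refine f.apply_eq_self_of_iterate_prime_card hN (fun g => ?_) x
  induction g using QuotientGroup.induction_on with
  | H y => rw [iterate_mk, hσ]; rfl

def transvectionSubgroup {M : Type*} [Group M] (N : Subgroup M) [N.Normal] :
    Subgroup (MulAut M) where
  carrier := {σ | (∀ x ∈ N, σ x = x) ∧ ∀ x, (σ x : M ⧸ N) = x}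
  one_mem' := ⟨fun _ _ => rfl, fun _ => rfl⟩
  mul_mem' := fun {a b} ha hb =>
    ⟨fun x hx => (congrArg a (hb.1 x hx)).trans (ha.1 x hx),
      fun x => (ha.2 (b x)).trans (hb.2 x)⟩
  inv_mem' := fun {a} ha => by
    have hquot : ∀ x, (a⁻¹ x : M ⧸ N) = x := fun x => by
      simpa using (ha.2 (a⁻¹ x)).symm
    refine ⟨fun x hx => ?_, hquot⟩
    have hmem : a⁻¹ x ∈ N := by
      rw [← QuotientGroup.eq_one_iff, hquot, QuotientGroup.eq_one_iff]; exact hx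
    simpa using (ha.1 _ hmem).symm

section Transvections

variable {M : Type*} [Group M] {N : Subgroup M} [N.Normal] {p : ℕ}

theorem pow_eq_one_of_mem_transvectionSubgroup (hexp : ∀ x ∈ N, x ^ p = 1) {σ : MulAut M}
    (hσ : σ ∈ transvectionSubgroup N) : σ ^ p = 1 := by
  ext x
  set d := x⁻¹ * σ x
  have hd : d ∈ N := QuotientGroup.eq.mp (hσ.2 x).symm
  have iterate_eq : ∀ j : ℕ, (σ ^ j) x = x * d ^ j := by
    intro j
    induction j with
    | zero => simp
    | succ j ih =>
      rw [pow_succ', MulAut.mul_apply, ih, map_mul, map_pow, hσ.1 d hd, pow_succ',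
        ← mul_assoc, mul_inv_cancel_left]
  rw [iterate_eq, hexp d hd, mul_one]; rfl

theorem isPGroup_transvectionSubgroup (hexp : ∀ x ∈ N, x ^ p = 1) :
    IsPGroup p (transvectionSubgroup N) := fun σ =>
  ⟨1, Subtype.ext (by simpa using pow_eq_one_of_mem_transvectionSubgroup hexp σ.2)⟩

theorem le_transvectionSubgroup [Fact p.Prime] {D : Subgroup (MulAut M)} (hDcard : Nat.card D = p)
    (hN : N.index = p) (hfix : ∀ σ ∈ D, ∀ x ∈ N, σ x = x) : D ≤ transvectionSubgroup N := by
  intro σ hσ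
  have hσp : σ ^ p = 1 := orderOf_dvd_iff_pow_eq_one.mp (hDcard ▸ D.orderOf_dvd_natCard hσ)
  refine ⟨hfix σ hσ, MulAut.mk_apply_eq_of_pow_eq_one hN (fun x hx => ?_) hσp⟩
  rw [hfix σ hσ x hx]; exact hx

end Transvections

section FixedSubgroup

variable {M : Type*} [Group M]

theorem fixedSubgroup_sup (D E : Subgroup (MulAut M)) :
    fixedSubgroup (D ⊔ E) = fixedSubgroup D ⊓ fixedSubgroup E := by
  refine le_antisymm (fun x hx => ⟨fun α hα => hx α (le_sup_left (a := D) hα),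
    fun α hα => hx α (le_sup_right (b := E) hα)⟩) ?_
  rintro x ⟨hD, hE⟩ α hα
  exact (sup_le (fun β hβ => hD β hβ) (fun β hβ => hE β hβ) :
    D ⊔ E ≤ MulAction.stabilizer (MulAut M) x) hα

theorem fixedSubgroup_eq_of_index_prime {D : Subgroup (MulAut M)} (hD : D ≠ ⊥)
    {N : Subgroup M} (hN : N.index.Prime) (hfix : ∀ α ∈ D, ∀ x ∈ N, α x = x) :
    fixedSubgroup D = N := by
  have hle : N ≤ fixedSubgroup D := fun x hx α hα => hfix α hα x hx
  refine (Subgroup.eq_or_eq_top_of_le_of_index_prime hN hle).resolve_right fun htop => hD ?_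
  refine (Subgroup.eq_bot_iff_forall D).mpr fun α hα => MulEquiv.ext fun x => ?_
  exact (htop ▸ Subgroup.mem_top x : x ∈ fixedSubgroup D) α hα

end FixedSubgroup

theorem stmt_14_general {M : Type*} [CommGroup M] (p : ℕ) (hp : p.Prime)
    (hexp : ∀ x : M, x ^ p = 1)
    (D E H : Subgroup (MulAut M))
    (hDcard : Nat.card D = p) (hEcard : Nat.card E = p)
    (hD : ∃ N : Subgroup M, N.index = p ∧ ∀ α ∈ D, ∀ x ∈ N, (α : MulAut M) x = x)
    (hE : ∃ N : Subgroup M, N.index = p ∧ ∀ α ∈ E, ∀ x ∈ N, (α : MulAut M) x = x)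
    (hH : H = D ⊔ E) (hnotp : ¬ IsPGroup p H) :
    (fixedSubgroup H).index = p ^ 2 := by
  have : Fact p.Prime := ⟨hp⟩
  obtain ⟨N₁, hN₁, hfixD⟩ := hD
  obtain ⟨N₂, hN₂, hfixE⟩ := hE
  have hne : N₁ ≠ N₂ := by
    rintro rfl
    refine hnotp (hH ▸ (isPGroup_transvectionSubgroup (N := N₁) fun x _ => hexp x).to_le ?_)
    exact sup_le (le_transvectionSubgroup hDcard hN₁ hfixD)
      (le_transvectionSubgroup hEcard hN₂ hfixE)
  have ne_bot {K : Subgroup (MulAut M)} (hK : Nat.card K = p) : K ≠ ⊥ := fun h =>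
    hp.one_lt.ne' (hK ▸ Subgroup.card_eq_one.mpr h)
  rw [hH, fixedSubgroup_sup, fixedSubgroup_eq_of_index_prime (ne_bot hDcard) (hN₁ ▸ hp) hfixD,
    fixedSubgroup_eq_of_index_prime (ne_bot hEcard) (hN₂ ▸ hp) hfixE]
  exact Subgroup.index_inf_eq_sq_of_ne hp hN₁ hN₂ hne

theorem stmt_14 {M : Type*} [CommGroup M] [Finite M] (p : ℕ) (hp : p.Prime)
    (hodd : Odd p) (hexp : ∀ x : M, x ^ p = 1)
    (D E H : Subgroup (MulAut M))
    (hDcard : Nat.card D = p) (hEcard : Nat.card E = p)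
    (hD : ∃ N : Subgroup M, N.index = p ∧ ∀ α ∈ D, ∀ x ∈ N, (α : MulAut M) x = x)
    (hE : ∃ N : Subgroup M, N.index = p ∧ ∀ α ∈ E, ∀ x ∈ N, (α : MulAut M) x = x)
    (hH : H = D ⊔ E) (hnotp : ¬ IsPGroup p H) :
    (fixedSubgroup H).index = p ^ 2 :=
  stmt_14_general p hp hexp D E H hDcard hEcard hD hE hH hnotp
end
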